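/- arXiv:2605.24167 — 3 statements merged into one kernel-verified Lean document; each statement's English description precedes it below -/
import Mathlib

section
/- (Multiple robustness of the one-step functional.) Suppose that for every k ∈ {1,…,τ}, either m′_k = m_k (the true sequential regression function) or g′_k = g_k (the true treatment probability). Then E[φ_1(Z; η′)] = θ, where θ = E[q_1(A_1, H_1)] is the true parameter and φ_1(Z; η′) is the pseudo-outcome at t = 0 (with empty augmentation s̄_0). -/
open MeasureTheory Finset

namespace GLMTP

variable {τ : ℕ}

/-- Augmented natural-treatment history: one treatment value for each time index `< tp`
(0-based; the paper's `s̄_t` corresponds to `tp = t`). -/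
abbrev SbarN (𝓐 : Fin τ → Type) (tp : ℕ) : Type :=
  ∀ s : {s : Fin τ // s.val < tp}, 𝓐 s.1

/-- Observed history `H_t = (L_1, A_1, …, A_{t-1}, L_t)`: covariates up to (and including)
time `t` and treatments strictly before time `t`. -/
abbrev Hist (𝓐 𝓛 : Fin τ → Type) (t : Fin τ) : Type :=
  (∀ s : {s : Fin τ // s ≤ t}, 𝓛 s.1) × (∀ s : {s : Fin τ // s < t}, 𝓐 s.1)

/-- A generalized longitudinal modified treatment policy: at each time `t` it maps the
history of natural treatment values `(a_1, …, a_t)` and the history `h_t` to a treatment. -/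
abbrev Policy (𝓐 𝓛 : Fin τ → Type) : Type :=
  ∀ t : Fin τ, SbarN 𝓐 (t.val + 1) → Hist 𝓐 𝓛 t → 𝓐 t

variable {𝓐 𝓛 : Fin τ → Type}

/-- The empty augmented history `s̄_0`. -/
def emptySbar (𝓐 : Fin τ → Type) : SbarN 𝓐 0 :=
  fun s => absurd s.2 (Nat.not_lt_zero _)

def restrictSb {tp tp' : ℕ} (h : tp' ≤ tp) (sb : SbarN 𝓐 tp) : SbarN 𝓐 tp' :=
  fun s => sb ⟨s.1, lt_of_lt_of_le s.2 h⟩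

/-- Append a treatment value at time `t` to an augmented history `s̄_{t-1}`. -/
def snoc {t : Fin τ} (sb : SbarN 𝓐 t.val) (a : 𝓐 t) : SbarN 𝓐 (t.val + 1) :=
  fun s =>
    if h : s.1 = t then cast (congrArg 𝓐 h).symm a
    else sb ⟨s.1, lt_of_le_of_ne (Nat.lt_succ_iff.mp s.2) (fun hv => h (Fin.ext hv))⟩

/-- Extension of an augmented history: treatment values at times `tp ≤ u ≤ k` (0-based),
i.e. the summation variables `s_{t+1}, …, s_k` of the paper. -/
abbrev Ext (𝓐 : Fin τ → Type) (tp : ℕ) (k : Fin τ) : Type :=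
  ∀ s : {s : Fin τ // tp ≤ s.val ∧ s.val ≤ k.val}, 𝓐 s.1

def mergeExt {tp : ℕ} {k : Fin τ} (sb : SbarN 𝓐 tp) (e : Ext 𝓐 tp k) :
    SbarN 𝓐 (k.val + 1) :=
  fun s =>
    if h : s.1.val < tp then sb ⟨s.1, h⟩
    else e ⟨s.1, ⟨not_lt.mp h, Nat.lt_succ_iff.mp s.2⟩⟩

/-- The observed data structure `Z = (L_1, A_1, …, L_τ, A_τ, Y)` with its law `μ`. -/
structure Model (𝓐 𝓛 : Fin τ → Type) (Ω : Type) [MeasurableSpace Ω] where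
  μ : Measure Ω
  L : ∀ t : Fin τ, Ω → 𝓛 t
  A : ∀ t : Fin τ, Ω → 𝓐 t
  Y : Ω → ℝ

variable {Ω : Type} [MeasurableSpace Ω]

/-- The observed history process `ω ↦ H_t(ω)`. -/
def Model.Hproc (M : Model 𝓐 𝓛 Ω) (t : Fin τ) (ω : Ω) : Hist 𝓐 𝓛 t :=
  (fun s => M.L s.1 ω, fun s => M.A s.1 ω)

/-- The event `{H_t = h}`. -/
def Model.histEvent (M : Model 𝓐 𝓛 Ω) (t : Fin τ) (h : Hist 𝓐 𝓛 t) : Set Ω :=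
  {ω | M.Hproc t ω = h}

/-- The event `{A_t = a, H_t = h}`. -/
def Model.condEvent (M : Model 𝓐 𝓛 Ω) (t : Fin τ) (a : 𝓐 t) (h : Hist 𝓐 𝓛 t) : Set Ω :=
  {ω | M.A t ω = a} ∩ M.histEvent t h

/-- Conditional expectation given an event, defined as a ratio. -/
noncomputable def condExpOn (μ : Measure Ω) (S : Set Ω) (X : Ω → ℝ) : ℝ :=
  (∫ ω in S, X ω ∂μ) / (μ S).toReal

/-- The true treatment mechanism `g_t(a ∣ h) = P(A_t = a ∣ H_t = h)`. -/
noncomputable def Model.g (M : Model 𝓐 𝓛 Ω) (t : Fin τ) (a : 𝓐 t) (h : Hist 𝓐 𝓛 t) : ℝ :=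
  (M.μ (M.condEvent t a h)).toReal / (M.μ (M.histEvent t h)).toReal

/-- Full positivity: `P(A_t = a, H_t = h) > 0` for every `t`, `a`, `h`. -/
def Model.Positivity (M : Model 𝓐 𝓛 Ω) : Prop :=
  ∀ (t : Fin τ) (a : 𝓐 t) (h : Hist 𝓐 𝓛 t), 0 < M.μ (M.condEvent t a h)

/-- Measurability of the observed variables. -/
def Model.Meas (M : Model 𝓐 𝓛 Ω) : Prop :=
  (∀ (t : Fin τ) (a : 𝓐 t), MeasurableSet {ω | M.A t ω = a}) ∧
  (∀ (t : Fin τ) (l : 𝓛 t), MeasurableSet {ω | M.L t ω = l}) ∧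
  Measurable M.Y

/-- `q_t` obtained from `m_t`:
`q_t(s̄_{t-1}, a_t, h_t) = m_t((s̄_{t-1},a_t), d_t((s̄_{t-1},a_t), h_t), h_t)`. -/
def qOf (d : Policy 𝓐 𝓛)
    (m : ∀ t : Fin τ, SbarN 𝓐 (t.val + 1) → 𝓐 t → Hist 𝓐 𝓛 t → ℝ)
    (t : Fin τ) (sb : SbarN 𝓐 t.val) (a : 𝓐 t) (h : Hist 𝓐 𝓛 t) : ℝ :=
  m t (snoc sb a) (d t (snoc sb a) h) h

/-- `ω ↦ q_{k+1}(s̄_k, A_{k+1}(ω), H_{k+1}(ω))`, with the convention `q_{τ+1} := Y`. -/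
def Model.qNext (M : Model 𝓐 𝓛 Ω)
    (q : ∀ t : Fin τ, SbarN 𝓐 t.val → 𝓐 t → Hist 𝓐 𝓛 t → ℝ)
    (k : Fin τ) (sb : SbarN 𝓐 (k.val + 1)) (ω : Ω) : ℝ :=
  if h : k.val + 1 < τ then
    q ⟨k.val + 1, h⟩ sb (M.A ⟨k.val + 1, h⟩ ω) (M.Hproc ⟨k.val + 1, h⟩ ω)
  else M.Y ω

/-- `m` is the (true) sequential-regression family for the policy `d`:
`m_t(s̄_t, a_t, h_t) = E[q_{t+1}(s̄_t, A_{t+1}, H_{t+1}) ∣ A_t = a_t, H_t = h_t]`,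
with `q_{τ+1} = Y` (so at `t = τ` this reads `m_τ(a_τ,h_τ) = E[Y ∣ A_τ = a_τ, H_τ = h_τ]`,
extended independently of `s̄_τ`). -/
def IsSeqReg (M : Model 𝓐 𝓛 Ω) (d : Policy 𝓐 𝓛)
    (m : ∀ t : Fin τ, SbarN 𝓐 (t.val + 1) → 𝓐 t → Hist 𝓐 𝓛 t → ℝ) : Prop :=
  ∀ (t : Fin τ) (sb : SbarN 𝓐 (t.val + 1)) (a : 𝓐 t) (h : Hist 𝓐 𝓛 t),
    m t sb a h = condExpOn M.μ (M.condEvent t a h) (M.qNext (qOf d m) t sb)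

/-- The parameter `θ = E[q_1(A_1, H_1)]`. -/
noncomputable def theta (hτ : 0 < τ) (M : Model 𝓐 𝓛 Ω) (d : Policy 𝓐 𝓛)
    (m : ∀ t : Fin τ, SbarN 𝓐 (t.val + 1) → 𝓐 t → Hist 𝓐 𝓛 t → ℝ) : ℝ :=
  ∫ ω, qOf d m ⟨0, hτ⟩ (emptySbar 𝓐) (M.A ⟨0, hτ⟩ ω) (M.Hproc ⟨0, hτ⟩ ω) ∂M.μ

variable [∀ t, DecidableEq (𝓐 t)] [∀ t, Fintype (𝓐 t)]

/-- Indicator `D_{t,k}(s̄_k)`: all treatments at times `tp ≤ u ≤ k` (0-based) follow the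
policy applied to the augmented history. -/
noncomputable def Dind (M : Model 𝓐 𝓛 Ω) (d : Policy 𝓐 𝓛) (tp : ℕ) (k : Fin τ)
    (sb : SbarN 𝓐 (k.val + 1)) (ω : Ω) : ℝ :=
  ∏ u : Fin τ,
    if hu : tp ≤ u.val ∧ u.val ≤ k.val then
      (if M.A u ω = d u (restrictSb (Nat.succ_le_succ hu.2) sb) (M.Hproc u ω) then 1 else 0)
    else 1

/-- Density-ratio weight `∏_{u} g'_u(s_u ∣ H_u)/g'_u(A_u ∣ H_u)` over times `tp ≤ u ≤ k`. -/
noncomputable def weight (M : Model 𝓐 𝓛 Ω) (g' : ∀ t : Fin τ, 𝓐 t → Hist 𝓐 𝓛 t → ℝ)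
    (tp : ℕ) (k : Fin τ) (sb : SbarN 𝓐 (k.val + 1)) (ω : Ω) : ℝ :=
  ∏ u : Fin τ,
    if hu : tp ≤ u.val ∧ u.val ≤ k.val then
      g' u (sb ⟨u, Nat.lt_succ_of_le hu.2⟩) (M.Hproc u ω) / g' u (M.A u ω) (M.Hproc u ω)
    else 1

/-- The pseudo-outcome `φ_{t+1}(s̄_t, Z; η')`; here `tp` is the paper's `t` (so times are
0-based internally: the paper's time `u` is the index `u - 1`). -/
noncomputable def phi (M : Model 𝓐 𝓛 Ω) (d : Policy 𝓐 𝓛)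
    (g' : ∀ t : Fin τ, 𝓐 t → Hist 𝓐 𝓛 t → ℝ)
    (m' : ∀ t : Fin τ, SbarN 𝓐 (t.val + 1) → 𝓐 t → Hist 𝓐 𝓛 t → ℝ)
    (tp : ℕ) (sb : SbarN 𝓐 tp) (ω : Ω) : ℝ :=
  (∑ k : Fin τ,
    if tp ≤ k.val then
      ∑ e : Ext 𝓐 tp k,
        Dind M d tp k (mergeExt sb e) ω * weight M g' tp k (mergeExt sb e) ω *
          (M.qNext (qOf d m') k (mergeExt sb e) ω -
            m' k (mergeExt sb e) (M.A k ω) (M.Hproc k ω))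
    else 0) +
  (if h : tp < τ then
      qOf d m' ⟨tp, h⟩ sb (M.A ⟨tp, h⟩ ω) (M.Hproc ⟨tp, h⟩ ω)
    else M.Y ω)

/-- The remainder `Rem_t(s̄_t, a_t, h_t; η')` of Theorem 2, as a function of the conditioning
event `S` (`S = {A_t = a_t, H_t = h_t}`, or `S = univ` for `t = 0`). -/
noncomputable def rem (M : Model 𝓐 𝓛 Ω) (d : Policy 𝓐 𝓛)
    (g' : ∀ t : Fin τ, 𝓐 t → Hist 𝓐 𝓛 t → ℝ)
    (m' mtrue : ∀ t : Fin τ, SbarN 𝓐 (t.val + 1) → 𝓐 t → Hist 𝓐 𝓛 t → ℝ)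
    (tp : ℕ) (sb : SbarN 𝓐 tp) (S : Set Ω) : ℝ :=
  ∑ k : Fin τ,
    if tp ≤ k.val then
      ∑ e : Ext 𝓐 tp k,
        condExpOn M.μ S (fun ω =>
          Dind M d tp k (mergeExt sb e) ω *
          (∏ r : Fin τ,
            if hr : tp ≤ r.val ∧ r.val < k.val then
              g' r (mergeExt sb e ⟨r, Nat.lt_succ_of_lt hr.2⟩) (M.Hproc r ω) /
                g' r (M.A r ω) (M.Hproc r ω)
            else 1) *
          (M.g k (mergeExt sb e ⟨k, Nat.lt_succ_self _⟩) (M.Hproc k ω) /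
              M.g k (M.A k ω) (M.Hproc k ω) -
            g' k (mergeExt sb e ⟨k, Nat.lt_succ_self _⟩) (M.Hproc k ω) /
              g' k (M.A k ω) (M.Hproc k ω)) *
          (m' k (mergeExt sb e) (M.A k ω) (M.Hproc k ω) -
            mtrue k (mergeExt sb e) (M.A k ω) (M.Hproc k ω)))
    else 0

section Aux

variable {Ω : Type} [MeasurableSpace Ω] {𝓐 𝓛 : Fin τ → Type}
variable [∀ t, DecidableEq (𝓐 t)] [∀ t, Fintype (𝓐 t)] [∀ t, Fintype (𝓛 t)]

/-- Bounded measurable real functions. -/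
def Nice (F : Ω → ℝ) (μ : Measure Ω) : Prop :=
  Measurable F ∧ ∃ C, ∀ ω, |F ω| ≤ C

theorem Nice.integrable {F : Ω → ℝ} {μ : Measure Ω} [IsFiniteMeasure μ]
    (h : Nice F μ) : Integrable F μ := by
  obtain ⟨hm, C, hC⟩ := h
  exact (integrable_const C).mono' hm.aestronglyMeasurable (Filter.Eventually.of_forall
    (fun ω => by simpa using hC ω))

theorem Nice.const {μ : Measure Ω} (c : ℝ) : Nice (fun _ : Ω => c) μ :=
  ⟨measurable_const, ⟨|c|, fun _ => le_refl _⟩⟩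

theorem Nice.add {F G : Ω → ℝ} {μ : Measure Ω} (hF : Nice F μ) (hG : Nice G μ) :
    Nice (fun ω => F ω + G ω) μ := by
  obtain ⟨hmF, C, hC⟩ := hF; obtain ⟨hmG, D, hD⟩ := hG
  exact ⟨hmF.add hmG, ⟨C + D, fun ω => (abs_add_le _ _).trans (add_le_add (hC ω) (hD ω))⟩⟩

theorem Nice.neg {F : Ω → ℝ} {μ : Measure Ω} (hF : Nice F μ) :
    Nice (fun ω => -F ω) μ := by
  obtain ⟨hmF, C, hC⟩ := hF
  exact ⟨hmF.neg, ⟨C, fun ω => by simpa using hC ω⟩⟩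

theorem Nice.sub {F G : Ω → ℝ} {μ : Measure Ω} (hF : Nice F μ) (hG : Nice G μ) :
    Nice (fun ω => F ω - G ω) μ := by
  simpa [sub_eq_add_neg] using hF.add hG.neg

theorem Nice.mul {F G : Ω → ℝ} {μ : Measure Ω} (hF : Nice F μ) (hG : Nice G μ) :
    Nice (fun ω => F ω * G ω) μ := by
  obtain ⟨hmF, C, hC⟩ := hF; obtain ⟨hmG, D, hD⟩ := hG
  refine ⟨hmF.mul hmG, ⟨|C| * |D|, fun ω => ?_⟩⟩
  rw [abs_mul]
  exact mul_le_mul ((hC ω).trans (le_abs_self C)) ((hD ω).trans (le_abs_self D))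
    (abs_nonneg _) (abs_nonneg _)

theorem Nice.sum {ι : Type*} (s : Finset ι) {F : ι → Ω → ℝ} {μ : Measure Ω}
    (h : ∀ i ∈ s, Nice (F i) μ) : Nice (fun ω => ∑ i ∈ s, F i ω) μ := by
  classical
  induction s using Finset.induction with
  | empty => simpa using Nice.const 0
  | insert a s hnot ih =>
    simp only [Finset.sum_insert hnot]
    exact (h a (Finset.mem_insert_self a s)).add
      (ih fun i hi => h i (Finset.mem_insert_of_mem hi))

theorem Nice.prod {ι : Type*} (s : Finset ι) {F : ι → Ω → ℝ} {μ : Measure Ω}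
    (h : ∀ i ∈ s, Nice (F i) μ) : Nice (fun ω => ∏ i ∈ s, F i ω) μ := by
  classical
  induction s using Finset.induction with
  | empty => simpa using Nice.const 1
  | insert a s hnot ih =>
    simp only [Finset.prod_insert hnot]
    exact (h a (Finset.mem_insert_self a s)).mul
      (ih fun i hi => h i (Finset.mem_insert_of_mem hi))

theorem measurableSet_histEvent {M : Model 𝓐 𝓛 Ω} (hmeas : M.Meas)
    (t : Fin τ) (h : Hist 𝓐 𝓛 t) : MeasurableSet (M.histEvent t h) := by
  have : M.histEvent t h =
      (⋂ s : {s : Fin τ // s ≤ t}, {ω | M.L s.1 ω = h.1 s}) ∩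
      (⋂ s : {s : Fin τ // s < t}, {ω | M.A s.1 ω = h.2 s}) := by
    ext ω
    simp only [Model.histEvent, Model.Hproc, Set.mem_setOf_eq, Set.mem_inter_iff,
      Set.mem_iInter, Prod.ext_iff]
    constructor
    · rintro ⟨h1, h2⟩
      exact ⟨fun s => congrFun h1 s, fun s => congrFun h2 s⟩
    · rintro ⟨h1, h2⟩
      exact ⟨funext h1, funext h2⟩
  rw [this]
  exact (MeasurableSet.iInter fun (s : {s : Fin τ // s ≤ t}) => hmeas.2.1 s.1 _).inter
    (MeasurableSet.iInter fun (s : {s : Fin τ // s < t}) => hmeas.1 s.1 _)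

theorem measurableSet_condEvent {M : Model 𝓐 𝓛 Ω} (hmeas : M.Meas)
    (t : Fin τ) (a : 𝓐 t) (h : Hist 𝓐 𝓛 t) : MeasurableSet (M.condEvent t a h) :=
  (hmeas.1 t a).inter (measurableSet_histEvent hmeas t h)

/-- A function of `(A_t, H_t)` is bounded measurable. -/
theorem nice_comp_AH {M : Model 𝓐 𝓛 Ω} (hmeas : M.Meas)
    (t : Fin τ) (f : 𝓐 t → Hist 𝓐 𝓛 t → ℝ) :
    Nice (fun ω => f (M.A t ω) (M.Hproc t ω)) M.μ := by
  classical
  have hfe : (fun ω => f (M.A t ω) (M.Hproc t ω)) =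
      fun ω => ∑ p : 𝓐 t × Hist 𝓐 𝓛 t,
        if ω ∈ M.condEvent t p.1 p.2 then f p.1 p.2 else 0 := by
    funext ω
    rw [Finset.sum_eq_single (M.A t ω, M.Hproc t ω)]
    · simp [Model.condEvent, Model.histEvent]
    · rintro ⟨a, h⟩ - hne
      rw [if_neg]
      rintro ⟨ha, hh⟩
      exact hne (by simp_all [Model.histEvent, Prod.ext_iff])
    · intro habs; exact absurd (Finset.mem_univ _) habs
  rw [hfe]
  refine Nice.sum _ (fun p _ => ⟨?_, ⟨|f p.1 p.2|, fun ω => ?_⟩⟩)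
  · exact Measurable.ite (measurableSet_condEvent hmeas t p.1 p.2)
      measurable_const measurable_const
  · by_cases hc : ω ∈ M.condEvent t p.1 p.2 <;> simp [hc]

end Aux
section Aux2

variable {Ω : Type} [MeasurableSpace Ω] {𝓐 𝓛 : Fin τ → Type}
variable [∀ t, DecidableEq (𝓐 t)] [∀ t, Fintype (𝓐 t)] [∀ t, Fintype (𝓛 t)]

/-- Glue a value at time `t` with an extension on times `> t`. -/
def glue {t k : Fin τ} (s : 𝓐 t) (e : Ext 𝓐 (t.val + 1) k) : Ext 𝓐 t.val k :=
  fun u =>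
    if h : u.1 = t then cast (congrArg 𝓐 h).symm s
    else e ⟨u.1, ⟨Nat.lt_of_le_of_ne u.2.1 (fun hv => h (Fin.ext hv.symm)), u.2.2⟩⟩

theorem merge_glue {t k : Fin τ} (sb : SbarN 𝓐 t.val) (s : 𝓐 t)
    (e : Ext 𝓐 (t.val + 1) k) :
    mergeExt sb (glue s e) = mergeExt (snoc sb s) e := by
  funext u
  obtain ⟨u1, hu⟩ := u
  rcases Nat.lt_trichotomy u1.val t.val with h | h | h
  · have hne : u1 ≠ t := fun hh => absurd (hh ▸ h) (lt_irrefl _)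
    simp [mergeExt, glue, snoc, h, Nat.lt_succ_of_lt h, hne]
  · have heq : u1 = t := Fin.ext h
    subst heq
    simp [mergeExt, glue, snoc]
  · have hne : u1 ≠ t := fun hh => absurd (hh ▸ h) (lt_irrefl _)
    have h1 : ¬ u1.val < t.val := Nat.not_lt.mpr (le_of_lt h)
    have h2 : ¬ u1.val < t.val + 1 := Nat.not_lt.mpr h
    simp [mergeExt, glue, snoc, h1, h2, hne]

theorem restrict_merge {t k : Fin τ} (htk : t.val ≤ k.val) (sb2 : SbarN 𝓐 (t.val + 1))
    (e : Ext 𝓐 (t.val + 1) k) :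
    restrictSb (Nat.succ_le_succ htk) (mergeExt sb2 e) = sb2 := by
  funext u
  simp [restrictSb, mergeExt, u.2]

theorem merge_snoc_self {t k : Fin τ} (htk : t.val < k.val + 1) (sb : SbarN 𝓐 t.val)
    (s : 𝓐 t) (e : Ext 𝓐 (t.val + 1) k) :
    mergeExt (snoc sb s) e ⟨t, htk⟩ = s := by
  simp [mergeExt, snoc]

theorem glue_restr {t k : Fin τ} (htk : t.val ≤ k.val) (e : Ext 𝓐 t.val k) :
    glue (e ⟨t, ⟨le_refl _, htk⟩⟩)
      (fun u => e ⟨u.1, ⟨Nat.le_of_succ_le u.2.1, u.2.2⟩⟩) = e := by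
  funext u
  obtain ⟨u1, hu⟩ := u
  by_cases h : u1 = t
  · subst h
    simp [glue]
  · simp [glue, h]

/-- The reindexing `Ext t k ≃ 𝓐 t × Ext (t+1) k`. -/
def extEquiv {t k : Fin τ} (htk : t.val ≤ k.val) :
    Ext 𝓐 t.val k ≃ 𝓐 t × Ext 𝓐 (t.val + 1) k where
  toFun e := ⟨e ⟨t, ⟨le_refl _, htk⟩⟩, fun u => e ⟨u.1, ⟨Nat.le_of_succ_le u.2.1, u.2.2⟩⟩⟩
  invFun p := glue p.1 p.2
  left_inv e := glue_restr htk e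
  right_inv p := by
    obtain ⟨s, e'⟩ := p
    refine Prod.ext ?_ ?_
    · simp [glue]
    · funext u
      have : u.1 ≠ t := fun hh =>
        absurd (hh ▸ u.2.1) (by simp)
      simp [glue, this]

theorem sum_ext_split {t k : Fin τ} (htk : t.val ≤ k.val) (F : Ext 𝓐 t.val k → ℝ) :
    ∑ e : Ext 𝓐 t.val k, F e =
      ∑ s : 𝓐 t, ∑ e' : Ext 𝓐 (t.val + 1) k, F (glue s e') := by
  classical
  have h1 : ∑ e : Ext 𝓐 t.val k, F e =
      ∑ p : 𝓐 t × Ext 𝓐 (t.val + 1) k, F (glue p.1 p.2) :=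
    Fintype.sum_equiv (extEquiv htk) _ _
      (fun e => (congrArg F (glue_restr htk e)).symm)
  rw [h1, Fintype.sum_prod_type]

end Aux2
section Aux3

variable {Ω : Type} [MeasurableSpace Ω] {𝓐 𝓛 : Fin τ → Type}
variable [∀ t, DecidableEq (𝓐 t)] [∀ t, Fintype (𝓐 t)] [∀ t, Fintype (𝓛 t)]
variable (M : Model 𝓐 𝓛 Ω) (d : Policy 𝓐 𝓛)

theorem Dind_split {t k : Fin τ} (htk : t.val ≤ k.val) (sb2 : SbarN 𝓐 (k.val + 1)) (ω : Ω) :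
    Dind M d t.val k sb2 ω =
      (if M.A t ω = d t (restrictSb (Nat.succ_le_succ htk) sb2) (M.Hproc t ω) then 1 else 0) *
        Dind M d (t.val + 1) k sb2 ω := by
  rw [Dind, Dind, ← Finset.mul_prod_erase Finset.univ _ (Finset.mem_univ t),
    ← Finset.mul_prod_erase Finset.univ _ (Finset.mem_univ t)]
  rw [dif_pos (⟨le_refl _, htk⟩ : t.val ≤ t.val ∧ t.val ≤ k.val),
    dif_neg (by simp : ¬ (t.val + 1 ≤ t.val ∧ t.val ≤ k.val)), one_mul]
  congr 1
  refine Finset.prod_congr rfl (fun u hu => ?_)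
  have hne : u.val ≠ t.val := fun hh => (Finset.mem_erase.mp hu).1 (Fin.ext hh)
  by_cases h1 : t.val + 1 ≤ u.val ∧ u.val ≤ k.val
  · rw [dif_pos h1, dif_pos ⟨Nat.le_of_succ_le h1.1, h1.2⟩]
  · rw [dif_neg h1, dif_neg (fun hh : t.val ≤ u.val ∧ u.val ≤ k.val =>
      h1 ⟨Nat.lt_of_le_of_ne hh.1 (fun e => hne e.symm), hh.2⟩)]

theorem weight_split (g' : ∀ t : Fin τ, 𝓐 t → Hist 𝓐 𝓛 t → ℝ)
    {t k : Fin τ} (htk : t.val ≤ k.val) (sb2 : SbarN 𝓐 (k.val + 1)) (ω : Ω) :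
    weight M g' t.val k sb2 ω =
      (g' t (sb2 ⟨t, Nat.lt_succ_of_le htk⟩) (M.Hproc t ω) / g' t (M.A t ω) (M.Hproc t ω)) *
        weight M g' (t.val + 1) k sb2 ω := by
  rw [weight, weight, ← Finset.mul_prod_erase Finset.univ _ (Finset.mem_univ t),
    ← Finset.mul_prod_erase Finset.univ _ (Finset.mem_univ t)]
  rw [dif_pos (⟨le_refl _, htk⟩ : t.val ≤ t.val ∧ t.val ≤ k.val),
    dif_neg (by simp : ¬ (t.val + 1 ≤ t.val ∧ t.val ≤ k.val)), one_mul]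
  congr 1
  refine Finset.prod_congr rfl (fun u hu => ?_)
  have hne : u.val ≠ t.val := fun hh => (Finset.mem_erase.mp hu).1 (Fin.ext hh)
  by_cases h1 : t.val + 1 ≤ u.val ∧ u.val ≤ k.val
  · rw [dif_pos h1, dif_pos ⟨Nat.le_of_succ_le h1.1, h1.2⟩]
  · rw [dif_neg h1, dif_neg (fun hh : t.val ≤ u.val ∧ u.val ≤ k.val =>
      h1 ⟨Nat.lt_of_le_of_ne hh.1 (fun e => hne e.symm), hh.2⟩)]

theorem Dind_one {tp : ℕ} {k : Fin τ} (hk : k.val < tp) (sb2 : SbarN 𝓐 (k.val + 1)) (ω : Ω) :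
    Dind M d tp k sb2 ω = 1 := by
  refine Finset.prod_eq_one (fun u _ => ?_)
  exact dif_neg (fun hh => absurd (le_trans hh.1 hh.2) (Nat.not_le.mpr hk))

theorem weight_one (g' : ∀ t : Fin τ, 𝓐 t → Hist 𝓐 𝓛 t → ℝ)
    {tp : ℕ} {k : Fin τ} (hk : k.val < tp) (sb2 : SbarN 𝓐 (k.val + 1)) (ω : Ω) :
    weight M g' tp k sb2 ω = 1 := by
  refine Finset.prod_eq_one (fun u _ => ?_)
  exact dif_neg (fun hh => absurd (le_trans hh.1 hh.2) (Nat.not_le.mpr hk))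

theorem merge_self {t : Fin τ} (sb2 : SbarN 𝓐 (t.val + 1)) (e : Ext 𝓐 (t.val + 1) t) :
    mergeExt sb2 e = sb2 := by
  funext u
  simp [mergeExt, u.2]

theorem sum_fin_split (t : Fin τ) (X : Fin τ → ℝ) :
    ∑ k : Fin τ, (if t.val ≤ k.val then X k else 0) =
      X t + ∑ k : Fin τ, (if t.val + 1 ≤ k.val then X k else 0) := by
  rw [← Finset.add_sum_erase Finset.univ _ (Finset.mem_univ t),
    ← Finset.add_sum_erase Finset.univ
      (fun k => if t.val + 1 ≤ k.val then X k else 0) (Finset.mem_univ t)]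
  rw [if_pos (le_refl _), if_neg (by simp), zero_add]
  congr 1
  refine Finset.sum_congr rfl (fun u hu => ?_)
  have hne : u.val ≠ t.val := fun hh => (Finset.mem_erase.mp hu).1 (Fin.ext hh)
  by_cases h1 : t.val + 1 ≤ u.val
  · rw [if_pos h1, if_pos (Nat.le_of_succ_le h1)]
  · rw [if_neg h1, if_neg (fun hh => h1 (Nat.lt_of_le_of_ne hh (fun e => hne e.symm)))]

theorem phi_tau (g' : ∀ t : Fin τ, 𝓐 t → Hist 𝓐 𝓛 t → ℝ)
    (m' : ∀ t : Fin τ, SbarN 𝓐 (t.val + 1) → 𝓐 t → Hist 𝓐 𝓛 t → ℝ)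
    (sb : SbarN 𝓐 τ) (ω : Ω) :
    phi M d g' m' τ sb ω = M.Y ω := by
  rw [phi, dif_neg (lt_irrefl τ), Finset.sum_eq_zero (fun k _ => ?_), zero_add]
  exact if_neg (Nat.not_le.mpr k.isLt)

end Aux3
section Aux4

variable {Ω : Type} [MeasurableSpace Ω] {𝓐 𝓛 : Fin τ → Type}
variable [∀ t, DecidableEq (𝓐 t)] [∀ t, Fintype (𝓐 t)] [∀ t, Fintype (𝓛 t)]
variable (M : Model 𝓐 𝓛 Ω) (d : Policy 𝓐 𝓛)

theorem phi_star (g' : ∀ t : Fin τ, 𝓐 t → Hist 𝓐 𝓛 t → ℝ)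
    (m' : ∀ t : Fin τ, SbarN 𝓐 (t.val + 1) → 𝓐 t → Hist 𝓐 𝓛 t → ℝ)
    (t : Fin τ) (sb : SbarN 𝓐 t.val) (ω : Ω) :
    phi M d g' m' t.val sb ω =
      (∑ s : 𝓐 t,
        ((if M.A t ω = d t (snoc sb s) (M.Hproc t ω) then (1 : ℝ) else 0) *
          (g' t s (M.Hproc t ω) / g' t (M.A t ω) (M.Hproc t ω))) *
          (phi M d g' m' (t.val + 1) (snoc sb s) ω -
            m' t (snoc sb s) (M.A t ω) (M.Hproc t ω))) +
      qOf d m' t sb (M.A t ω) (M.Hproc t ω) := by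
  classical
  haveI hie : IsEmpty {u : Fin τ // t.val + 1 ≤ u.val ∧ u.val ≤ t.val} :=
    ⟨fun u => absurd (le_trans u.2.1 u.2.2) (by simp)⟩
  set c : 𝓐 t → ℝ := fun s =>
    (if M.A t ω = d t (snoc sb s) (M.Hproc t ω) then (1 : ℝ) else 0) *
      (g' t s (M.Hproc t ω) / g' t (M.A t ω) (M.Hproc t ω)) with hc
  set U : Fin τ → 𝓐 t → ℝ := fun k s =>
    ∑ e' : Ext 𝓐 (t.val + 1) k,
      Dind M d (t.val + 1) k (mergeExt (snoc sb s) e') ω *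
        weight M g' (t.val + 1) k (mergeExt (snoc sb s) e') ω *
        (M.qNext (qOf d m') k (mergeExt (snoc sb s) e') ω -
          m' k (mergeExt (snoc sb s) e') (M.A k ω) (M.Hproc k ω)) with hU
  have hA : ∀ k : Fin τ, t.val ≤ k.val →
      (∑ e : Ext 𝓐 t.val k,
        Dind M d t.val k (mergeExt sb e) ω * weight M g' t.val k (mergeExt sb e) ω *
          (M.qNext (qOf d m') k (mergeExt sb e) ω -
            m' k (mergeExt sb e) (M.A k ω) (M.Hproc k ω))) = ∑ s, c s * U k s := by
    intro k hk
    rw [sum_ext_split hk]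
    refine Finset.sum_congr rfl fun s _ => ?_
    simp only [hU]
    rw [Finset.mul_sum]
    refine Finset.sum_congr rfl fun e' _ => ?_
    rw [merge_glue, Dind_split M d hk, weight_split M g' hk, restrict_merge hk,
      merge_snoc_self (Nat.lt_succ_of_le hk) sb s e', hc]
    ring
  have hphi : ∀ s : 𝓐 t, phi M d g' m' (t.val + 1) (snoc sb s) ω =
      (∑ k : Fin τ, if t.val + 1 ≤ k.val then U k s else 0) +
        M.qNext (qOf d m') t (snoc sb s) ω := by
    intro s
    rfl
  have hUt : ∀ s : 𝓐 t, U t s =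
      M.qNext (qOf d m') t (snoc sb s) ω -
        m' t (snoc sb s) (M.A t ω) (M.Hproc t ω) := by
    intro s
    simp only [hU]
    rw [Finset.sum_eq_single_of_mem ((fun u => isEmptyElim u) : Ext 𝓐 (t.val + 1) t)
      (Finset.mem_univ _) (fun b _ hb => absurd (funext fun u => isEmptyElim u) hb)]
    rw [merge_self, Dind_one M d (Nat.lt_succ_self _), weight_one M g' (Nat.lt_succ_self _),
      one_mul, one_mul]
  conv_lhs => rw [phi]
  rw [dif_pos t.isLt]
  simp only [Fin.eta]
  congr 1
  calc
    (∑ k : Fin τ, if t.val ≤ k.val then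
        ∑ e : Ext 𝓐 t.val k,
          Dind M d t.val k (mergeExt sb e) ω * weight M g' t.val k (mergeExt sb e) ω *
            (M.qNext (qOf d m') k (mergeExt sb e) ω -
              m' k (mergeExt sb e) (M.A k ω) (M.Hproc k ω)) else 0)
        = ∑ k : Fin τ, if t.val ≤ k.val then ∑ s, c s * U k s else 0 := by
          refine Finset.sum_congr rfl fun k _ => ?_
          by_cases hk : t.val ≤ k.val
          · rw [if_pos hk, if_pos hk, hA k hk]
          · rw [if_neg hk, if_neg hk]
    _ = (∑ s, c s * U t s) +
        ∑ k : Fin τ, if t.val + 1 ≤ k.val then ∑ s, c s * U k s else 0 :=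
          sum_fin_split t _
    _ = (∑ s, c s * U t s) +
        ∑ s, c s * (∑ k : Fin τ, if t.val + 1 ≤ k.val then U k s else 0) := by
          congr 1
          have hsw : ∀ k : Fin τ, (if t.val + 1 ≤ k.val then ∑ s, c s * U k s else 0) =
              ∑ s, c s * (if t.val + 1 ≤ k.val then U k s else 0) := by
            intro k
            by_cases hk : t.val + 1 ≤ k.val <;> simp [hk]
          simp only [hsw]
          rw [Finset.sum_comm]
          exact Finset.sum_congr rfl fun s _ => (Finset.mul_sum _ _ _).symm
    _ = ∑ s, c s * (U t s + ∑ k : Fin τ, if t.val + 1 ≤ k.val then U k s else 0) := by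
          rw [← Finset.sum_add_distrib]
          exact Finset.sum_congr rfl fun s _ => (mul_add _ _ _).symm
    _ = ∑ s, c s * (phi M d g' m' (t.val + 1) (snoc sb s) ω -
          m' t (snoc sb s) (M.A t ω) (M.Hproc t ω)) := by
          refine Finset.sum_congr rfl fun s _ => ?_
          rw [hphi s, hUt s]
          ring

end Aux4
section Aux5

variable {Ω : Type} [MeasurableSpace Ω] {𝓐 𝓛 : Fin τ → Type}
variable [∀ t, DecidableEq (𝓐 t)] [∀ t, Fintype (𝓐 t)] [∀ t, Fintype (𝓛 t)]
variable (M : Model 𝓐 𝓛 Ω) (d : Policy 𝓐 𝓛)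

theorem nice_qNext (hmeas : M.Meas) (hbdd : ∃ C, ∀ ω, |M.Y ω| ≤ C)
    (q : ∀ t : Fin τ, SbarN 𝓐 t.val → 𝓐 t → Hist 𝓐 𝓛 t → ℝ)
    (k : Fin τ) (sb : SbarN 𝓐 (k.val + 1)) :
    Nice (M.qNext q k sb) M.μ := by
  by_cases h : k.val + 1 < τ
  · have : M.qNext q k sb = fun ω =>
        q ⟨k.val + 1, h⟩ sb (M.A ⟨k.val + 1, h⟩ ω) (M.Hproc ⟨k.val + 1, h⟩ ω) := by
      funext ω; rw [Model.qNext, dif_pos h]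
    rw [this]
    exact nice_comp_AH hmeas _ _
  · have : M.qNext q k sb = M.Y := by
      funext ω; rw [Model.qNext, dif_neg h]
    rw [this]
    exact ⟨hmeas.2.2, hbdd⟩

theorem nice_Dind (hmeas : M.Meas) (tp : ℕ) (k : Fin τ) (sb : SbarN 𝓐 (k.val + 1)) :
    Nice (Dind M d tp k sb) M.μ := by
  have : Dind M d tp k sb = fun ω => ∏ u : Fin τ,
      (fun u (ω : Ω) =>
        if hu : tp ≤ u.val ∧ u.val ≤ k.val then
          (if M.A u ω = d u (restrictSb (Nat.succ_le_succ hu.2) sb) (M.Hproc u ω)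
            then (1 : ℝ) else 0)
        else 1) u ω := rfl
  rw [this]
  refine Nice.prod _ (fun u _ => ?_)
  by_cases hu : tp ≤ u.val ∧ u.val ≤ k.val
  · simp only [dif_pos hu]
    exact nice_comp_AH hmeas u
      (fun a h => if a = d u (restrictSb (Nat.succ_le_succ hu.2) sb) h then (1 : ℝ) else 0)
  · simp only [dif_neg hu]
    exact Nice.const 1

theorem nice_weight (hmeas : M.Meas) (g' : ∀ t : Fin τ, 𝓐 t → Hist 𝓐 𝓛 t → ℝ)
    (tp : ℕ) (k : Fin τ) (sb : SbarN 𝓐 (k.val + 1)) :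
    Nice (weight M g' tp k sb) M.μ := by
  have : weight M g' tp k sb = fun ω => ∏ u : Fin τ,
      (fun u (ω : Ω) =>
        if hu : tp ≤ u.val ∧ u.val ≤ k.val then
          g' u (sb ⟨u, Nat.lt_succ_of_le hu.2⟩) (M.Hproc u ω) / g' u (M.A u ω) (M.Hproc u ω)
        else 1) u ω := rfl
  rw [this]
  refine Nice.prod _ (fun u _ => ?_)
  by_cases hu : tp ≤ u.val ∧ u.val ≤ k.val
  · simp only [dif_pos hu]
    exact nice_comp_AH hmeas u
      (fun a h => g' u (sb ⟨u, Nat.lt_succ_of_le hu.2⟩) h / g' u a h)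
  · simp only [dif_neg hu]
    exact Nice.const 1

theorem nice_phi (hmeas : M.Meas) (hbdd : ∃ C, ∀ ω, |M.Y ω| ≤ C)
    (g' : ∀ t : Fin τ, 𝓐 t → Hist 𝓐 𝓛 t → ℝ)
    (m' : ∀ t : Fin τ, SbarN 𝓐 (t.val + 1) → 𝓐 t → Hist 𝓐 𝓛 t → ℝ)
    (tp : ℕ) (sb : SbarN 𝓐 tp) :
    Nice (phi M d g' m' tp sb) M.μ := by
  refine Nice.add (Nice.sum Finset.univ (fun k _ => ?_)) ?_
  · by_cases hk : tp ≤ k.val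
    · simp only [if_pos hk]
      refine Nice.sum Finset.univ (fun e _ => ?_)
      refine ((nice_Dind M d hmeas tp k _).mul (nice_weight M hmeas g' tp k _)).mul
        ((nice_qNext M hmeas hbdd _ k _).sub ?_)
      exact nice_comp_AH hmeas k (fun a h => m' k (mergeExt sb e) a h)
    · simp only [if_neg hk]
      exact Nice.const 0
  · by_cases h : tp < τ
    · simp only [dif_pos h]
      exact nice_comp_AH hmeas _ (fun a hh => qOf d m' ⟨tp, h⟩ sb a hh)
    · simp only [dif_neg h]
      exact ⟨hmeas.2.2, hbdd⟩

end Aux5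
section Aux6

variable {Ω : Type} [MeasurableSpace Ω] {𝓐 𝓛 : Fin τ → Type}
variable [∀ t, DecidableEq (𝓐 t)] [∀ t, Fintype (𝓐 t)] [∀ t, Fintype (𝓛 t)]
variable (M : Model 𝓐 𝓛 Ω)

theorem mem_condEvent_iff {t : Fin τ} {a : 𝓐 t} {h : Hist 𝓐 𝓛 t} {ω : Ω} :
    ω ∈ M.condEvent t a h ↔ M.A t ω = a ∧ M.Hproc t ω = h := Iff.rfl

theorem toReal_condEvent_pos [IsProbabilityMeasure M.μ] (hpos : M.Positivity)
    (t : Fin τ) (a : 𝓐 t) (h : Hist 𝓐 𝓛 t) : 0 < (M.μ (M.condEvent t a h)).toReal :=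
  ENNReal.toReal_pos (ne_of_gt (hpos t a h)) (measure_ne_top _ _)

theorem toReal_histEvent_pos [IsProbabilityMeasure M.μ] (hpos : M.Positivity)
    [∀ t, Nonempty (𝓐 t)] (t : Fin τ) (h : Hist 𝓐 𝓛 t) :
    0 < (M.μ (M.histEvent t h)).toReal := by
  refine ENNReal.toReal_pos (ne_of_gt ?_) (measure_ne_top _ _)
  exact lt_of_lt_of_le (hpos t (Classical.arbitrary _) h)
    (measure_mono Set.inter_subset_right)

theorem g_pos [IsProbabilityMeasure M.μ] (hpos : M.Positivity) [∀ t, Nonempty (𝓐 t)]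
    (t : Fin τ) (a : 𝓐 t) (h : Hist 𝓐 𝓛 t) : 0 < M.g t a h :=
  div_pos (toReal_condEvent_pos M hpos t a h) (toReal_histEvent_pos M hpos t h)

theorem condEvent_toReal_eq [IsProbabilityMeasure M.μ] (hpos : M.Positivity)
    [∀ t, Nonempty (𝓐 t)] (t : Fin τ) (a : 𝓐 t) (h : Hist 𝓐 𝓛 t) :
    (M.μ (M.condEvent t a h)).toReal = M.g t a h * (M.μ (M.histEvent t h)).toReal := by
  rw [Model.g, div_mul_cancel₀]
  exact ne_of_gt (toReal_histEvent_pos M hpos t h)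

theorem hist_determines {t1 : Fin τ} {h'' : Hist 𝓐 𝓛 t1} {ω₁ ω₂ : Ω}
    (h1 : M.Hproc t1 ω₁ = h'') (h2 : M.Hproc t1 ω₂ = h'') {t : Fin τ} (htt : t < t1) :
    M.A t ω₁ = M.A t ω₂ ∧ M.Hproc t ω₁ = M.Hproc t ω₂ := by
  have heq : M.Hproc t1 ω₁ = M.Hproc t1 ω₂ := h1.trans h2.symm
  constructor
  · exact congrArg (fun hh => hh.2 ⟨t, htt⟩) heq
  · refine Prod.ext ?_ ?_
    · funext s
      exact congrArg (fun hh => hh.1 ⟨s.1, le_trans s.2 (le_of_lt htt)⟩) heq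
    · funext s
      exact congrArg (fun hh => hh.2 ⟨s.1, lt_trans s.2 htt⟩) heq

theorem dichotomy {t t1 : Fin τ} (htt : t < t1) (a : 𝓐 t) (h : Hist 𝓐 𝓛 t)
    (h'' : Hist 𝓐 𝓛 t1) :
    M.histEvent t1 h'' ⊆ M.condEvent t a h ∨
      M.condEvent t a h ∩ M.histEvent t1 h'' = ∅ := by
  by_cases hne : (M.condEvent t a h ∩ M.histEvent t1 h'').Nonempty
  · left
    obtain ⟨ω₀, hω₀⟩ := hne
    intro ω hω
    have hd := hist_determines M hω hω₀.2 htt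
    exact ⟨hd.1.trans hω₀.1.1, hd.2.trans hω₀.1.2⟩
  · right
    exact Set.not_nonempty_iff_eq_empty.mp hne

theorem integral_partition (hmeas : M.Meas) [IsFiniteMeasure M.μ] (t1 : Fin τ)
    {S : Set Ω} (hS : MeasurableSet S) {F : Ω → ℝ} (hF : Nice F M.μ) :
    ∫ ω in S, F ω ∂M.μ =
      ∑ p : 𝓐 t1 × Hist 𝓐 𝓛 t1, ∫ ω in S ∩ M.condEvent t1 p.1 p.2, F ω ∂M.μ := by
  classical
  have hcover : S = ⋃ p ∈ (Finset.univ : Finset (𝓐 t1 × Hist 𝓐 𝓛 t1)),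
      S ∩ M.condEvent t1 p.1 p.2 := by
    ext ω
    simp only [Set.mem_iUnion, Set.mem_inter_iff, Finset.mem_univ, exists_true_left]
    constructor
    · intro hω
      exact ⟨(M.A t1 ω, M.Hproc t1 ω), hω, rfl, rfl⟩
    · rintro ⟨p, hω, -⟩
      exact hω
  rw [show (∫ ω in S, F ω ∂M.μ) = ∫ ω in ⋃ p ∈ (Finset.univ : Finset (𝓐 t1 × Hist 𝓐 𝓛 t1)),
      S ∩ M.condEvent t1 p.1 p.2, F ω ∂M.μ from by rw [← hcover]]
  rw [MeasureTheory.integral_biUnion_finset]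
  · exact fun p _ => hS.inter (measurableSet_condEvent hmeas t1 p.1 p.2)
  · intro p _ q _ hpq
    simp only [Function.onFun]
    refine Set.disjoint_left.mpr (fun ω h1 h2 => hpq ?_)
    have e1 := h1.2; have e2 := h2.2
    refine Prod.ext ?_ ?_
    · exact e1.1.symm.trans e2.1
    · exact e1.2.symm.trans e2.2
  · exact fun p _ => hF.integrable.integrableOn

theorem setIntegral_eqOn_const {S : Set Ω} {μ : Measure Ω} [IsFiniteMeasure μ]
    (hS : MeasurableSet S) {F : Ω → ℝ} {c : ℝ} (h : ∀ ω ∈ S, F ω = c) :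
    ∫ ω in S, F ω ∂μ = c * (μ S).toReal := by
  rw [MeasureTheory.setIntegral_congr_fun hS (fun ω hω => h ω hω),
    MeasureTheory.setIntegral_const, smul_eq_mul, mul_comm]
  rfl

end Aux6
section Aux7

variable {Ω : Type} [MeasurableSpace Ω] {𝓐 𝓛 : Fin τ → Type}
variable [∀ t, DecidableEq (𝓐 t)] [∀ t, Fintype (𝓐 t)] [∀ t, Fintype (𝓛 t)]
variable [∀ t, Nonempty (𝓐 t)]
variable (M : Model 𝓐 𝓛 Ω) (d : Policy 𝓐 𝓛)

theorem step_lemma [IsProbabilityMeasure M.μ]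
    (hmeas : M.Meas) (hbdd : ∃ C, ∀ ω, |M.Y ω| ≤ C) (hpos : M.Positivity)
    (m : ∀ t : Fin τ, SbarN 𝓐 (t.val + 1) → 𝓐 t → Hist 𝓐 𝓛 t → ℝ)
    (g' : ∀ t : Fin τ, 𝓐 t → Hist 𝓐 𝓛 t → ℝ)
    (hg' : ∀ (t : Fin τ) (a : 𝓐 t) (h : Hist 𝓐 𝓛 t), 0 < g' t a h)
    (m' : ∀ t : Fin τ, SbarN 𝓐 (t.val + 1) → 𝓐 t → Hist 𝓐 𝓛 t → ℝ)
    (t1 : Fin τ)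
    (hrob1 : m' t1 = m t1 ∨ g' t1 = M.g t1)
    (sb : SbarN 𝓐 t1.val) {S : Set Ω} (hS : MeasurableSet S)
    (hdich : ∀ h' : Hist 𝓐 𝓛 t1, M.histEvent t1 h' ⊆ S ∨ S ∩ M.histEvent t1 h' = ∅)
    (IH : ∀ (sb1 : SbarN 𝓐 (t1.val + 1)) (a : 𝓐 t1) (h : Hist 𝓐 𝓛 t1),
      (∫ ω in M.condEvent t1 a h, phi M d g' m' (t1.val + 1) sb1 ω ∂M.μ) =
        m t1 sb1 a h * (M.μ (M.condEvent t1 a h)).toReal) :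
    (∫ ω in S, phi M d g' m' t1.val sb ω ∂M.μ) =
      ∫ ω in S, qOf d m t1 sb (M.A t1 ω) (M.Hproc t1 ω) ∂M.μ := by
  classical
  rw [integral_partition M hmeas t1 hS (nice_phi M d hmeas hbdd g' m' t1.val sb),
    integral_partition M hmeas t1 hS
      (nice_comp_AH hmeas t1 (fun a h => qOf d m t1 sb a h))]
  have l1 : ∀ (G : Ω → ℝ),
      (∑ p : 𝓐 t1 × Hist 𝓐 𝓛 t1, ∫ ω in S ∩ M.condEvent t1 p.1 p.2, G ω ∂M.μ) =
        ∑ h : Hist 𝓐 𝓛 t1, ∑ a : 𝓐 t1, ∫ ω in S ∩ M.condEvent t1 a h, G ω ∂M.μ := by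
    intro G
    rw [Fintype.sum_prod_type, Finset.sum_comm]
  rw [l1, l1]
  refine Finset.sum_congr rfl fun h _ => ?_
  rcases hdich h with hsub | hemp
  · -- `S` contains the whole history event
    have hinter : ∀ a : 𝓐 t1, S ∩ M.condEvent t1 a h = M.condEvent t1 a h := fun a =>
      Set.inter_eq_self_of_subset_right (le_trans Set.inter_subset_right hsub)
    simp only [hinter]
    have hRa : ∀ a : 𝓐 t1,
        (∫ ω in M.condEvent t1 a h, qOf d m t1 sb (M.A t1 ω) (M.Hproc t1 ω) ∂M.μ) =
          qOf d m t1 sb a h * (M.μ (M.condEvent t1 a h)).toReal := fun a =>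
      setIntegral_eqOn_const (measurableSet_condEvent hmeas t1 a h) (fun ω hω => by
        have h1 : M.A t1 ω = a := hω.1
        have h2 : M.Hproc t1 ω = h := hω.2
        rw [h1, h2])
    have hLa : ∀ a : 𝓐 t1,
        (∫ ω in M.condEvent t1 a h, phi M d g' m' t1.val sb ω ∂M.μ) =
          (∑ s : 𝓐 t1,
            ((if a = d t1 (snoc sb s) h then (1 : ℝ) else 0) * (g' t1 s h / g' t1 a h)) *
              (m t1 (snoc sb s) a h - m' t1 (snoc sb s) a h)) *
            (M.μ (M.condEvent t1 a h)).toReal +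
          qOf d m' t1 sb a h * (M.μ (M.condEvent t1 a h)).toReal := by
      intro a
      have hCE := measurableSet_condEvent hmeas t1 a h
      rw [MeasureTheory.setIntegral_congr_fun hCE (g := fun ω =>
          (∑ s : 𝓐 t1,
            ((if a = d t1 (snoc sb s) h then (1 : ℝ) else 0) * (g' t1 s h / g' t1 a h)) *
              (phi M d g' m' (t1.val + 1) (snoc sb s) ω - m' t1 (snoc sb s) a h)) +
          qOf d m' t1 sb a h) (fun ω hω => by
            have h1 : M.A t1 ω = a := hω.1
            have h2 : M.Hproc t1 ω = h := hω.2
            rw [phi_star M d g' m' t1 sb ω, h1, h2])]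
      rw [MeasureTheory.integral_add ?_ (MeasureTheory.integrable_const _)]
      rotate_left
      · exact (Nice.sum Finset.univ (fun s _ => (Nice.const _).mul
          ((nice_phi M d hmeas hbdd g' m' _ _).sub (Nice.const _)))).integrable.integrableOn
      rw [MeasureTheory.integral_finset_sum _ (fun s _ => ((Nice.const _).mul
        ((nice_phi M d hmeas hbdd g' m' _ _).sub (Nice.const _))).integrable.integrableOn)]
      rw [MeasureTheory.setIntegral_const, smul_eq_mul]
      congr 1
      rw [Finset.sum_mul]
      refine Finset.sum_congr rfl fun s _ => ?_
      rw [MeasureTheory.integral_const_mul,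
        MeasureTheory.integral_sub ((nice_phi M d hmeas hbdd g' m' _
          _).integrable.integrableOn) (MeasureTheory.integrable_const _),
        MeasureTheory.setIntegral_const, smul_eq_mul, IH (snoc sb s) a h]
      simp only [Measure.real]
      ring
      exact mul_comm _ _
    simp only [hLa, hRa]
    rcases hrob1 with hmm | hgg
    · -- `m'` correct at `t1`
      refine Finset.sum_congr rfl fun a _ => ?_
      have h0 : ∀ s : 𝓐 t1, m t1 (snoc sb s) a h - m' t1 (snoc sb s) a h = 0 := fun s => by
        rw [hmm, sub_self]
      have hq : qOf d m' t1 sb a h = qOf d m t1 sb a h := by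
        rw [qOf, qOf, hmm]
      simp [h0, hq]
    · -- `g'` correct at `t1`
      simp only [hgg, condEvent_toReal_eq M hpos]
      have hgne : ∀ a : 𝓐 t1, M.g t1 a h ≠ 0 := fun a => ne_of_gt (g_pos M hpos t1 a h)
      rw [Finset.sum_add_distrib]
      have hmain : (∑ a : 𝓐 t1,
          (∑ s : 𝓐 t1,
            ((if a = d t1 (snoc sb s) h then (1 : ℝ) else 0) * (M.g t1 s h / M.g t1 a h)) *
              (m t1 (snoc sb s) a h - m' t1 (snoc sb s) a h)) *
            (M.g t1 a h * (M.μ (M.histEvent t1 h)).toReal)) =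
          ∑ s : 𝓐 t1, M.g t1 s h * (qOf d m t1 sb s h - qOf d m' t1 sb s h) *
            (M.μ (M.histEvent t1 h)).toReal := by
        have hsw : ∀ a : 𝓐 t1, (∑ s : 𝓐 t1,
            ((if a = d t1 (snoc sb s) h then (1 : ℝ) else 0) * (M.g t1 s h / M.g t1 a h)) *
              (m t1 (snoc sb s) a h - m' t1 (snoc sb s) a h)) *
            (M.g t1 a h * (M.μ (M.histEvent t1 h)).toReal) =
            ∑ s : 𝓐 t1, (if a = d t1 (snoc sb s) h then
              (M.g t1 s h / M.g t1 a h) * (m t1 (snoc sb s) a h - m' t1 (snoc sb s) a h) *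
                (M.g t1 a h * (M.μ (M.histEvent t1 h)).toReal) else 0) := by
          intro a
          rw [Finset.sum_mul]
          refine Finset.sum_congr rfl fun s _ => ?_
          by_cases hd : a = d t1 (snoc sb s) h
          · rw [if_pos hd, if_pos hd]; ring
          · rw [if_neg hd, if_neg hd]; ring
        simp only [hsw]
        rw [Finset.sum_comm]
        refine Finset.sum_congr rfl fun s _ => ?_
        rw [Finset.sum_ite_eq' Finset.univ (d t1 (snoc sb s) h)]
        simp only [Finset.mem_univ, if_pos]
        have : m t1 (snoc sb s) (d t1 (snoc sb s) h) h - m' t1 (snoc sb s) (d t1 (snoc sb s) h) h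
            = qOf d m t1 sb s h - qOf d m' t1 sb s h := rfl
        rw [this]
        have halg : ∀ x y z w : ℝ, w ≠ 0 → x / w * y * (w * z) = x * y * z := by
          intro x y z w hw; field_simp
        exact halg _ _ _ _ (hgne _)
      rw [hmain, ← Finset.sum_add_distrib]
      refine Finset.sum_congr rfl fun s _ => ?_
      ring
  · -- `S` misses the history event
    have he : ∀ a : 𝓐 t1, S ∩ M.condEvent t1 a h = ∅ := fun a => by
      apply Set.eq_empty_of_subset_empty
      rw [← hemp]
      exact Set.inter_subset_inter_right S Set.inter_subset_right
    simp [he]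

end Aux7
section Aux8

variable {Ω : Type} [MeasurableSpace Ω] {𝓐 𝓛 : Fin τ → Type}
variable [∀ t, DecidableEq (𝓐 t)] [∀ t, Fintype (𝓐 t)] [∀ t, Fintype (𝓛 t)]
variable [∀ t, Nonempty (𝓐 t)]
variable (M : Model 𝓐 𝓛 Ω) (d : Policy 𝓐 𝓛)

theorem phiCond [IsProbabilityMeasure M.μ]
    (hmeas : M.Meas) (hbdd : ∃ C, ∀ ω, |M.Y ω| ≤ C) (hpos : M.Positivity)
    (m : ∀ t : Fin τ, SbarN 𝓐 (t.val + 1) → 𝓐 t → Hist 𝓐 𝓛 t → ℝ)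
    (hm : IsSeqReg M d m)
    (g' : ∀ t : Fin τ, 𝓐 t → Hist 𝓐 𝓛 t → ℝ)
    (hg' : ∀ (t : Fin τ) (a : 𝓐 t) (h : Hist 𝓐 𝓛 t), 0 < g' t a h)
    (m' : ∀ t : Fin τ, SbarN 𝓐 (t.val + 1) → 𝓐 t → Hist 𝓐 𝓛 t → ℝ)
    (hrob : ∀ k : Fin τ, m' k = m k ∨ g' k = M.g k) :
    ∀ (n : ℕ) (t : Fin τ), τ - t.val ≤ n →
      ∀ (sb1 : SbarN 𝓐 (t.val + 1)) (a : 𝓐 t) (h : Hist 𝓐 𝓛 t),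
        (∫ ω in M.condEvent t a h, phi M d g' m' (t.val + 1) sb1 ω ∂M.μ) =
          m t sb1 a h * (M.μ (M.condEvent t a h)).toReal := by
  intro n
  induction n with
  | zero =>
    intro t ht
    have := t.isLt
    omega
  | succ n IHn =>
    intro t ht sb1 a h
    have hμne : (M.μ (M.condEvent t a h)).toReal ≠ 0 :=
      ne_of_gt (toReal_condEvent_pos M hpos t a h)
    by_cases hlast : t.val + 1 < τ
    · have hdich := fun h'' =>
        dichotomy M (show t < (⟨t.val + 1, hlast⟩ : Fin τ) from
          Fin.lt_def.mpr (Nat.lt_succ_self _)) a h h''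
      have hstep := step_lemma M d hmeas hbdd hpos m g' hg' m'
        ⟨t.val + 1, hlast⟩ (hrob ⟨t.val + 1, hlast⟩) sb1
        (measurableSet_condEvent hmeas t a h) hdich
        (fun sb2 a2 h2 => IHn ⟨t.val + 1, hlast⟩ (show τ - (t.val + 1) ≤ n by omega) sb2 a2 h2)
      calc
        (∫ ω in M.condEvent t a h, phi M d g' m' (t.val + 1) sb1 ω ∂M.μ)
            = ∫ ω in M.condEvent t a h,
                qOf d m ⟨t.val + 1, hlast⟩ sb1 (M.A ⟨t.val + 1, hlast⟩ ω)
                  (M.Hproc ⟨t.val + 1, hlast⟩ ω) ∂M.μ := hstep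
        _ = ∫ ω in M.condEvent t a h, M.qNext (qOf d m) t sb1 ω ∂M.μ := by
              refine MeasureTheory.setIntegral_congr_fun
                (measurableSet_condEvent hmeas t a h) (fun ω _ => ?_)
              rw [Model.qNext, dif_pos hlast]
        _ = m t sb1 a h * (M.μ (M.condEvent t a h)).toReal := by
              rw [hm t sb1 a h, condExpOn, div_mul_cancel₀ _ hμne]
    · have hτeq : t.val + 1 = τ := le_antisymm t.isLt (Nat.not_lt.mp hlast)
      have hphiY : ∀ ω, phi M d g' m' (t.val + 1) sb1 ω = M.Y ω := by
        intro ω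
        rw [phi, dif_neg hlast, Finset.sum_eq_zero (fun k _ =>
          if_neg (show ¬ t.val + 1 ≤ k.val by have := k.isLt; omega)), zero_add]
      rw [MeasureTheory.setIntegral_congr_fun (measurableSet_condEvent hmeas t a h)
        (fun ω _ => hphiY ω)]
      have hqY : M.qNext (qOf d m) t sb1 = M.Y := funext fun ω => by
        rw [Model.qNext, dif_neg hlast]
      rw [hm t sb1 a h, hqY, condExpOn, div_mul_cancel₀ _ hμne]

end Aux8
/-- **Multiple robustness of the one-step functional**: if for every `k ∈ {1, …, τ}` either
`m'_k = m_k` (the true sequential regression) or `g'_k = g_k` (the true treatment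
probability), then `E[φ_1(Z; η')] = θ`, where `θ = E[q_1(A_1, H_1)]`. -/
theorem multiple_robustness_one_step
    [∀ t, Nonempty (𝓐 t)] [∀ t, Fintype (𝓛 t)] [∀ t, Nonempty (𝓛 t)]
    (hτ : 0 < τ)
    (M : Model 𝓐 𝓛 Ω) [IsProbabilityMeasure M.μ]
    (hmeas : M.Meas) (hbdd : ∃ C, ∀ ω, |M.Y ω| ≤ C)
    (hpos : M.Positivity)
    (d : Policy 𝓐 𝓛)
    -- the true sequential regression functions
    (m : ∀ t : Fin τ, SbarN 𝓐 (t.val + 1) → 𝓐 t → Hist 𝓐 𝓛 t → ℝ)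
    (hm : IsSeqReg M d m)
    -- nuisance values η' = (g'_t, m'_t)
    (g' : ∀ t : Fin τ, 𝓐 t → Hist 𝓐 𝓛 t → ℝ)
    (hg' : ∀ (t : Fin τ) (a : 𝓐 t) (h : Hist 𝓐 𝓛 t), 0 < g' t a h)
    (m' : ∀ t : Fin τ, SbarN 𝓐 (t.val + 1) → 𝓐 t → Hist 𝓐 𝓛 t → ℝ)
    (hrob : ∀ k : Fin τ, m' k = m k ∨ g' k = M.g k) :
    (∫ ω, phi M d g' m' 0 (emptySbar 𝓐) ω ∂M.μ) = theta hτ M d m := by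
  classical
  have hstep := step_lemma M d hmeas hbdd hpos m g' hg' m'
    ⟨0, hτ⟩ (hrob ⟨0, hτ⟩) (emptySbar 𝓐) MeasurableSet.univ
    (fun h' => Or.inl (Set.subset_univ _))
    (fun sb1 a h => phiCond M d hmeas hbdd hpos m hm g' hg' m' hrob τ ⟨0, hτ⟩
      (by omega) sb1 a h)
  calc
    (∫ ω, phi M d g' m' 0 (emptySbar 𝓐) ω ∂M.μ)
        = ∫ ω in Set.univ, phi M d g' m' 0 (emptySbar 𝓐) ω ∂M.μ := by
          rw [MeasureTheory.setIntegral_univ]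
    _ = ∫ ω in Set.univ,
          qOf d m ⟨0, hτ⟩ (emptySbar 𝓐) (M.A ⟨0, hτ⟩ ω) (M.Hproc ⟨0, hτ⟩ ω) ∂M.μ := hstep
    _ = theta hτ M d m := by
          rw [MeasureTheory.setIntegral_univ]; rfl

end GLMTP
end

section
/- (Gateaux derivative / efficient influence function in the discrete model.) Let 𝒵 = ℒ_1 × 𝒜_1 × ⋯ × ℒ_τ × 𝒜_τ × 𝒴 be the finite sample space. For a strictly positive probability mass function p on 𝒵, let Θ(p) denote the g-computation functional computed from p, let η(p) = (g_t^p, m_t^p)_{t=1}^τ denote the treatment probabilities and sequential regression functions computed from p, and let φ̄_1(z; p) = φ_1(z; η(p)) − Θ(p) denote the canonical gradient evaluated at the point z ∈ 𝒵. Then for every probability mass function p̃ on 𝒵, the map ε ↦ Θ((1−ε)p + εp̃) is differentiable at ε = 0 with derivative Σ_{z ∈ 𝒵} p̃(z) · φ̄_1(z; p). -/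
open MeasureTheory Finset

namespace GLMTP

variable {τ : ℕ}

variable {𝓐 𝓛 : Fin τ → Type}

/-- The finite sample space `𝒵 = ℒ_1 × 𝒜_1 × ⋯ × ℒ_τ × 𝒜_τ × 𝒴`, with `𝒴 ⊂ ℝ` finite. -/
abbrev Zspace (𝓐 𝓛 : Fin τ → Type) (𝒴 : Finset ℝ) : Type :=
  (∀ t : Fin τ, 𝓛 t) × (∀ t : Fin τ, 𝓐 t) × {y : ℝ // y ∈ 𝒴}

variable {𝒴 : Finset ℝ}

def Az (z : Zspace 𝓐 𝓛 𝒴) (t : Fin τ) : 𝓐 t := z.2.1 t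

def Yz (z : Zspace 𝓐 𝓛 𝒴) : ℝ := z.2.2.1

def Hz (z : Zspace 𝓐 𝓛 𝒴) (t : Fin τ) : Hist 𝓐 𝓛 t :=
  (fun s => z.1 s.1, fun s => z.2.1 s.1)

variable [∀ t, DecidableEq (𝓐 t)] [∀ t, Fintype (𝓐 t)]
  [∀ t, DecidableEq (𝓛 t)] [∀ t, Fintype (𝓛 t)]

/-- Conditional expectation `E_p[X ∣ A_t = a, H_t = h]`, a ratio of finite sums. -/
noncomputable def condExpP (p : Zspace 𝓐 𝓛 𝒴 → ℝ) (t : Fin τ) (a : 𝓐 t)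
    (h : Hist 𝓐 𝓛 t) (X : Zspace 𝓐 𝓛 𝒴 → ℝ) : ℝ :=
  (∑ z : Zspace 𝓐 𝓛 𝒴, if Az z t = a ∧ Hz z t = h then p z * X z else 0) /
  (∑ z : Zspace 𝓐 𝓛 𝒴, if Az z t = a ∧ Hz z t = h then p z else 0)

/-- The treatment probability `g_t^p(a ∣ h)` computed from `p`. -/
noncomputable def gP (p : Zspace 𝓐 𝓛 𝒴 → ℝ) (t : Fin τ) (a : 𝓐 t)
    (h : Hist 𝓐 𝓛 t) : ℝ :=
  (∑ z : Zspace 𝓐 𝓛 𝒴, if Az z t = a ∧ Hz z t = h then p z else 0) /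
  (∑ z : Zspace 𝓐 𝓛 𝒴, if Hz z t = h then p z else 0)

/-- The sequential regression functions `m_t^p` computed from `p` (downward recursion,
with the convention `q_{τ+1}^p = Y`). -/
noncomputable def mP (d : Policy 𝓐 𝓛) (p : Zspace 𝓐 𝓛 𝒴 → ℝ)
    (t : Fin τ) (sb : SbarN 𝓐 (t.val + 1)) (a : 𝓐 t) (h : Hist 𝓐 𝓛 t) : ℝ :=
  condExpP p t a h (fun z =>
    if hlt : t.val + 1 < τ then
      mP d p ⟨t.val + 1, hlt⟩ (snoc (t := ⟨t.val + 1, hlt⟩) sb (Az z ⟨t.val + 1, hlt⟩))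
        (d ⟨t.val + 1, hlt⟩ (snoc (t := ⟨t.val + 1, hlt⟩) sb (Az z ⟨t.val + 1, hlt⟩))
          (Hz z ⟨t.val + 1, hlt⟩))
        (Hz z ⟨t.val + 1, hlt⟩)
    else Yz z)
termination_by τ - t.val
decreasing_by omega

/-- `q_t^p(s̄_{t-1}, a_t, h_t) = m_t^p((s̄_{t-1}, a_t), d_t((s̄_{t-1}, a_t), h_t), h_t)`. -/
noncomputable def qP (d : Policy 𝓐 𝓛) (p : Zspace 𝓐 𝓛 𝒴 → ℝ)
    (t : Fin τ) (sb : SbarN 𝓐 t.val) (a : 𝓐 t) (h : Hist 𝓐 𝓛 t) : ℝ :=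
  mP d p t (snoc sb a) (d t (snoc sb a) h) h

/-- The g-computation functional `Θ(p) = E_p[q_1^p(A_1, H_1)]`. -/
noncomputable def ThetaP (hτ : 0 < τ) (d : Policy 𝓐 𝓛) (p : Zspace 𝓐 𝓛 𝒴 → ℝ) : ℝ :=
  ∑ z : Zspace 𝓐 𝓛 𝒴,
    p z * qP d p ⟨0, hτ⟩ (emptySbar 𝓐) (Az z ⟨0, hτ⟩) (Hz z ⟨0, hτ⟩)

/-- Indicator `D_{0,k}(s̄_k)(z)`. -/
noncomputable def DindP (d : Policy 𝓐 𝓛) (k : Fin τ) (sbk : SbarN 𝓐 (k.val + 1))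
    (z : Zspace 𝓐 𝓛 𝒴) : ℝ :=
  ∏ u : Fin τ,
    if hu : u.val ≤ k.val then
      (if Az z u = d u (restrictSb (Nat.succ_le_succ hu) sbk) (Hz z u) then 1 else 0)
    else 1

/-- Weight `∏_{u=1}^k g_u^p(s_u ∣ H_u(z)) / g_u^p(A_u(z) ∣ H_u(z))`. -/
noncomputable def weightP (p : Zspace 𝓐 𝓛 𝒴 → ℝ) (k : Fin τ)
    (sbk : SbarN 𝓐 (k.val + 1)) (z : Zspace 𝓐 𝓛 𝒴) : ℝ :=
  ∏ u : Fin τ,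
    if hu : u.val ≤ k.val then
      gP p u (sbk ⟨u, Nat.lt_succ_of_le hu⟩) (Hz z u) / gP p u (Az z u) (Hz z u)
    else 1

/-- `q_{k+1}^p(s̄_k, A_{k+1}(z), H_{k+1}(z))`, with terminal value `Y(z)`. -/
noncomputable def qNextP (d : Policy 𝓐 𝓛) (p : Zspace 𝓐 𝓛 𝒴 → ℝ) (k : Fin τ)
    (sbk : SbarN 𝓐 (k.val + 1)) (z : Zspace 𝓐 𝓛 𝒴) : ℝ :=
  if hlt : k.val + 1 < τ then
    qP d p ⟨k.val + 1, hlt⟩ sbk (Az z ⟨k.val + 1, hlt⟩) (Hz z ⟨k.val + 1, hlt⟩)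
  else Yz z

/-- The pseudo-outcome `φ_1(z; η(p))` evaluated at the realization `z`. -/
noncomputable def phiP (hτ : 0 < τ) (d : Policy 𝓐 𝓛) (p : Zspace 𝓐 𝓛 𝒴 → ℝ)
    (z : Zspace 𝓐 𝓛 𝒴) : ℝ :=
  (∑ k : Fin τ, ∑ e : Ext 𝓐 0 k,
      DindP d k (mergeExt (emptySbar 𝓐) e) z * weightP p k (mergeExt (emptySbar 𝓐) e) z *
        (qNextP d p k (mergeExt (emptySbar 𝓐) e) z -
          mP d p k (mergeExt (emptySbar 𝓐) e) (Az z k) (Hz z k))) +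
  qP d p ⟨0, hτ⟩ (emptySbar 𝓐) (Az z ⟨0, hτ⟩) (Hz z ⟨0, hτ⟩)


set_option linter.unusedSectionVars false

section Aux

variable [∀ t, Nonempty (𝓐 t)] [∀ t, Nonempty (𝓛 t)] [Nonempty {y : ℝ // y ∈ 𝒴}]

open Classical in
/-- A point of `Zspace` with prescribed `A_t` and `H_t`. -/
lemma exists_fiber (t : Fin τ) (a : 𝓐 t) (h : Hist 𝓐 𝓛 t) :
    ∃ z : Zspace 𝓐 𝓛 𝒴, Az z t = a ∧ Hz z t = h := by
  classical
  refine ⟨⟨fun s => if hs : s ≤ t then h.1 ⟨s, hs⟩ else Classical.arbitrary _,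
          fun s => if hs : s < t then h.2 ⟨s, hs⟩ else
            if hs' : s = t then cast (congrArg 𝓐 hs').symm a else Classical.arbitrary _,
          Classical.arbitrary _⟩, ?_, ?_⟩
  · show dite _ _ _ = a
    rw [dif_neg (lt_irrefl t), dif_pos rfl]
    rfl
  · refine Prod.ext ?_ ?_ <;> funext s
    · show dite _ _ _ = _
      rw [dif_pos s.2]
    · show dite _ _ _ = _
      rw [dif_pos s.2]

variable {p : Zspace 𝓐 𝓛 𝒴 → ℝ}

lemma den_pos (hp : ∀ z, 0 < p z) (t : Fin τ) (a : 𝓐 t) (h : Hist 𝓐 𝓛 t) :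
    0 < ∑ z : Zspace 𝓐 𝓛 𝒴, if Az z t = a ∧ Hz z t = h then p z else 0 := by
  obtain ⟨z0, hz0⟩ := exists_fiber (𝒴 := 𝒴) t a h
  refine Finset.sum_pos' (fun z _ => by split_ifs; exacts [(hp z).le, le_refl 0]) ⟨z0, Finset.mem_univ _, ?_⟩
  rw [if_pos hz0]; exact hp z0

lemma denH_pos (hp : ∀ z, 0 < p z) (t : Fin τ) (h : Hist 𝓐 𝓛 t) :
    0 < ∑ z : Zspace 𝓐 𝓛 𝒴, if Hz z t = h then p z else 0 := by
  obtain ⟨z0, hz0⟩ := exists_fiber (𝒴 := 𝒴) t (Classical.arbitrary _) h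
  refine Finset.sum_pos' (fun z _ => by split_ifs; exacts [(hp z).le, le_refl 0]) ⟨z0, Finset.mem_univ _, ?_⟩
  rw [if_pos hz0.2]; exact hp z0

lemma gP_pos (hp : ∀ z, 0 < p z) (t : Fin τ) (a : 𝓐 t) (h : Hist 𝓐 𝓛 t) : 0 < gP p t a h :=
  div_pos (den_pos hp t a h) (denH_pos hp t h)

lemma den_eq_gP_mul (hp : ∀ z, 0 < p z) (t : Fin τ) (a : 𝓐 t) (h : Hist 𝓐 𝓛 t) :
    (∑ z : Zspace 𝓐 𝓛 𝒴, if Az z t = a ∧ Hz z t = h then p z else 0)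
      = gP p t a h * (∑ z : Zspace 𝓐 𝓛 𝒴, if Hz z t = h then p z else 0) := by
  rw [gP, div_mul_cancel₀]
  exact (denH_pos hp t h).ne'

end Aux

section Aux2

variable [∀ t, Nonempty (𝓐 t)] [∀ t, Nonempty (𝓛 t)] [Nonempty {y : ℝ // y ∈ 𝒴}]
variable {p : Zspace 𝓐 𝓛 𝒴 → ℝ}

/-- The integrand of the sequential regression recursion. -/
noncomputable def integrand (d : Policy 𝓐 𝓛) (p : Zspace 𝓐 𝓛 𝒴 → ℝ)
    (t : Fin τ) (sb : SbarN 𝓐 (t.val + 1)) (z : Zspace 𝓐 𝓛 𝒴) : ℝ :=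
  if hlt : t.val + 1 < τ then
    mP d p ⟨t.val + 1, hlt⟩ (snoc (t := ⟨t.val + 1, hlt⟩) sb (Az z ⟨t.val + 1, hlt⟩))
      (d ⟨t.val + 1, hlt⟩ (snoc (t := ⟨t.val + 1, hlt⟩) sb (Az z ⟨t.val + 1, hlt⟩))
        (Hz z ⟨t.val + 1, hlt⟩))
      (Hz z ⟨t.val + 1, hlt⟩)
  else Yz z

lemma mP_eq (d : Policy 𝓐 𝓛) (t : Fin τ) (sb : SbarN 𝓐 (t.val + 1)) (a : 𝓐 t)
    (h : Hist 𝓐 𝓛 t) : mP d p t sb a h = condExpP p t a h (integrand d p t sb) := by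
  rw [mP]; rfl

lemma integrand_eq_qNextP (d : Policy 𝓐 𝓛) (t : Fin τ) (sb : SbarN 𝓐 (t.val + 1))
    (z : Zspace 𝓐 𝓛 𝒴) : integrand d p t sb z = qNextP d p t sb z := rfl

lemma condExpP_add (t : Fin τ) (a : 𝓐 t) (h : Hist 𝓐 𝓛 t) (X Y : Zspace 𝓐 𝓛 𝒴 → ℝ) :
    condExpP p t a h (fun z => X z + Y z) = condExpP p t a h X + condExpP p t a h Y := by
  unfold condExpP
  rw [← add_div, ← Finset.sum_add_distrib]
  congr 1
  refine Finset.sum_congr rfl fun z _ => ?_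
  split_ifs <;> ring

end Aux2

section Aux3

variable [∀ t, Nonempty (𝓐 t)] [∀ t, Nonempty (𝓛 t)] [Nonempty {y : ℝ // y ∈ 𝒴}]
variable {p : Zspace 𝓐 𝓛 𝒴 → ℝ}

lemma hz_of_le {z z' : Zspace 𝓐 𝓛 𝒴} {u k : Fin τ} (huk : u ≤ k)
    (hH : Hz z k = Hz z' k) : Hz z u = Hz z' u := by
  refine Prod.ext ?_ ?_ <;> funext s
  · exact congrFun (congrArg Prod.fst hH) ⟨s.1, le_trans s.2 huk⟩
  · exact congrFun (congrArg Prod.snd hH) ⟨s.1, lt_of_lt_of_le s.2 huk⟩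

lemma az_of_le {z z' : Zspace 𝓐 𝓛 𝒴} {u k : Fin τ} (huk : u ≤ k)
    (hH : Hz z k = Hz z' k) (hA : Az z k = Az z' k) : Az z u = Az z' u := by
  rcases eq_or_lt_of_le huk with he | hlt
  · cases he; exact hA
  · exact congrFun (congrArg Prod.snd hH) ⟨u, hlt⟩

/-- Tower-property mean-zero: for a weight depending on `z` only through `(A_k, H_k)`,
`∑_z p z ⬝ G z ⬝ (X z − E[X ∣ A_k, H_k]) = 0`. -/
lemma sum_weight_sub_condExp (hp : ∀ z, 0 < p z) (k : Fin τ) (G X : Zspace 𝓐 𝓛 𝒴 → ℝ)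
    (hG : ∀ z z', Az z k = Az z' k → Hz z k = Hz z' k → G z = G z') :
    ∑ z : Zspace 𝓐 𝓛 𝒴,
      p z * G z * (X z - condExpP p k (Az z k) (Hz z k) X) = 0 := by
  classical
  have hfib := Finset.sum_fiberwise (Finset.univ : Finset (Zspace 𝓐 𝓛 𝒴))
    (fun z => (Az z k, Hz z k))
    (fun z => p z * G z * (X z - condExpP p k (Az z k) (Hz z k) X))
  rw [← hfib]
  refine Finset.sum_eq_zero fun b _ => ?_
  obtain ⟨a, h⟩ := b
  by_cases hne : ∃ z0 : Zspace 𝓐 𝓛 𝒴, Az z0 k = a ∧ Hz z0 k = h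
  · obtain ⟨z0, hz0A, hz0H⟩ := hne
    have hrw : ∀ z ∈ Finset.univ.filter
        (fun z : Zspace 𝓐 𝓛 𝒴 => (Az z k, Hz z k) = (a, h)),
        p z * G z * (X z - condExpP p k (Az z k) (Hz z k) X)
          = G z0 * (p z * (X z - condExpP p k a h X)) := by
      intro z hz
      rw [Finset.mem_filter] at hz
      have hA : Az z k = a := (Prod.mk.injEq _ _ _ _ ▸ hz.2).1
      have hH : Hz z k = h := (Prod.mk.injEq _ _ _ _ ▸ hz.2).2
      rw [hA, hH, hG z z0 (hA.trans hz0A.symm) (hH.trans hz0H.symm)]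
      ring
    rw [Finset.sum_congr rfl hrw, ← Finset.mul_sum]
    refine mul_eq_zero_of_right _ ?_
    have hsplit : ∀ z : Zspace 𝓐 𝓛 𝒴,
        (if (Az z k, Hz z k) = (a, h) then p z * (X z - condExpP p k a h X) else 0)
          = (if Az z k = a ∧ Hz z k = h then p z * X z else 0)
            - (if Az z k = a ∧ Hz z k = h then p z else 0) * condExpP p k a h X := by
      intro z
      by_cases hc : Az z k = a ∧ Hz z k = h
      · rw [if_pos (by simp [hc.1, hc.2]), if_pos hc, if_pos hc]; ring
      · rw [if_neg (by simpa [Prod.mk.injEq] using hc), if_neg hc, if_neg hc]; ring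
    rw [Finset.sum_filter, Finset.sum_congr rfl (fun z _ => hsplit z),
      Finset.sum_sub_distrib, ← Finset.sum_mul]
    have hden := (den_pos hp k a h).ne'
    rw [condExpP]
    field_simp
    ring
  · push_neg at hne
    refine Finset.sum_eq_zero fun z hz => ?_
    rw [Finset.mem_filter] at hz
    have hA : Az z k = a := (Prod.mk.injEq _ _ _ _ ▸ hz.2).1
    have hH : Hz z k = h := (Prod.mk.injEq _ _ _ _ ▸ hz.2).2
    exact absurd hH (hne z hA)

end Aux3

section Aux4

variable [∀ t, Nonempty (𝓐 t)] [∀ t, Nonempty (𝓛 t)] [Nonempty {y : ℝ // y ∈ 𝒴}]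
variable {p pt : Zspace 𝓐 𝓛 𝒴 → ℝ}

lemma hasDerivAt_pe (p pt : Zspace 𝓐 𝓛 𝒴 → ℝ) (z : Zspace 𝓐 𝓛 𝒴) :
    HasDerivAt (fun ε : ℝ => (1 - ε) * p z + ε * pt z) (pt z - p z) 0 := by
  have h : HasDerivAt (fun ε : ℝ => (1 - ε) * p z + ε * pt z)
      ((0 - 1) * p z + (1 * pt z + 0 * 0)) 0 := by
    exact (((hasDerivAt_const (0:ℝ) (1:ℝ)).sub (hasDerivAt_id 0)).mul_const (p z)).add
      ((hasDerivAt_id 0).mul (hasDerivAt_const (0:ℝ) (pt z)))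
  convert h using 1
  ring

/-- Derivative of a conditional expectation along the mixture path, with an
`ε`-dependent integrand. -/
lemma hasDerivAt_condExpP (hp : ∀ z, 0 < p z) (t : Fin τ) (a : 𝓐 t) (h : Hist 𝓐 𝓛 t)
    (X : ℝ → Zspace 𝓐 𝓛 𝒴 → ℝ) (DX : Zspace 𝓐 𝓛 𝒴 → ℝ)
    (hX : ∀ z, HasDerivAt (fun ε => X ε z) (DX z) 0) :
    HasDerivAt (fun ε : ℝ => condExpP (fun z => (1 - ε) * p z + ε * pt z) t a h (X ε))
      (condExpP p t a h (fun z =>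
        (pt z - p z) / p z * (X 0 z - condExpP p t a h (X 0)) + DX z)) 0 := by
  classical
  set D0 : ℝ := ∑ z : Zspace 𝓐 𝓛 𝒴, if Az z t = a ∧ Hz z t = h then p z else 0 with hD0
  set Dd : ℝ := ∑ z : Zspace 𝓐 𝓛 𝒴, if Az z t = a ∧ Hz z t = h then pt z - p z else 0
    with hDd
  set N0 : ℝ := ∑ z : Zspace 𝓐 𝓛 𝒴, if Az z t = a ∧ Hz z t = h then p z * X 0 z else 0
    with hN0
  set Nd : ℝ := ∑ z : Zspace 𝓐 𝓛 𝒴,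
    if Az z t = a ∧ Hz z t = h then (pt z - p z) * X 0 z + p z * DX z else 0 with hNd
  have hD0pos : 0 < D0 := den_pos hp t a h
  have hnum : HasDerivAt (fun ε : ℝ => ∑ z : Zspace 𝓐 𝓛 𝒴,
      if Az z t = a ∧ Hz z t = h then ((1 - ε) * p z + ε * pt z) * X ε z else 0) Nd 0 := by
    rw [hNd]
    refine HasDerivAt.fun_sum fun z _ => ?_
    by_cases hc : Az z t = a ∧ Hz z t = h
    · simp only [if_pos hc]
      have hd := (hasDerivAt_pe p pt z).mul (hX z)
      refine hd.congr_deriv ?_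
      norm_num
    · simp only [if_neg hc]
      exact hasDerivAt_const 0 0
  have hden : HasDerivAt (fun ε : ℝ => ∑ z : Zspace 𝓐 𝓛 𝒴,
      if Az z t = a ∧ Hz z t = h then ((1 - ε) * p z + ε * pt z) else 0) Dd 0 := by
    rw [hDd]
    refine HasDerivAt.fun_sum fun z _ => ?_
    by_cases hc : Az z t = a ∧ Hz z t = h
    · simp only [if_pos hc]; exact hasDerivAt_pe p pt z
    · simp only [if_neg hc]; exact hasDerivAt_const 0 0
  have hden0 : (∑ z : Zspace 𝓐 𝓛 𝒴,
      if Az z t = a ∧ Hz z t = h then ((1 - (0:ℝ)) * p z + 0 * pt z) else 0) ≠ 0 := by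
    have : (∑ z : Zspace 𝓐 𝓛 𝒴,
        if Az z t = a ∧ Hz z t = h then ((1 - (0:ℝ)) * p z + 0 * pt z) else 0) = D0 := by
      rw [hD0]; refine Finset.sum_congr rfl fun z _ => ?_; split_ifs <;> ring
    rw [this]; exact hD0pos.ne'
  have hquot := hnum.div hden hden0
  have hfun : (fun ε : ℝ => condExpP (fun z => (1 - ε) * p z + ε * pt z) t a h (X ε))
      = fun ε : ℝ => (∑ z : Zspace 𝓐 𝓛 𝒴,
          if Az z t = a ∧ Hz z t = h then ((1 - ε) * p z + ε * pt z) * X ε z else 0) /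
        (∑ z : Zspace 𝓐 𝓛 𝒴,
          if Az z t = a ∧ Hz z t = h then ((1 - ε) * p z + ε * pt z) else 0) := rfl
  rw [hfun]
  refine hquot.congr_deriv ?_
  -- identify the claimed derivative with the quotient-rule expression
  have hval0 : (∑ z : Zspace 𝓐 𝓛 𝒴,
      if Az z t = a ∧ Hz z t = h then ((1 - (0:ℝ)) * p z + 0 * pt z) * X 0 z else 0) = N0 := by
    rw [hN0]; refine Finset.sum_congr rfl fun z _ => ?_; split_ifs <;> ring
  have hden0' : (∑ z : Zspace 𝓐 𝓛 𝒴,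
      if Az z t = a ∧ Hz z t = h then ((1 - (0:ℝ)) * p z + 0 * pt z) else 0) = D0 := by
    rw [hD0]; refine Finset.sum_congr rfl fun z _ => ?_; split_ifs <;> ring
  rw [hval0, hden0']
  have hc : condExpP p t a h (X 0) = N0 / D0 := rfl
  have hsummand : ∀ z : Zspace 𝓐 𝓛 𝒴,
      p z * ((pt z - p z) / p z * (X 0 z - condExpP p t a h (X 0)) + DX z)
        = ((pt z - p z) * X 0 z + p z * DX z) - (pt z - p z) * (N0 / D0) := by
    intro z
    rw [hc]
    field_simp [(hp z).ne']
    ring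
  have hLHS : condExpP p t a h (fun z =>
      (pt z - p z) / p z * (X 0 z - condExpP p t a h (X 0)) + DX z)
        = (Nd - Dd * (N0 / D0)) / D0 := by
    rw [condExpP, ← hD0]
    congr 1
    have : ∀ z : Zspace 𝓐 𝓛 𝒴,
        (if Az z t = a ∧ Hz z t = h then
            p z * ((pt z - p z) / p z * (X 0 z - condExpP p t a h (X 0)) + DX z) else 0)
          = (if Az z t = a ∧ Hz z t = h then
              (pt z - p z) * X 0 z + p z * DX z else 0)
            - (if Az z t = a ∧ Hz z t = h then pt z - p z else 0) * (N0 / D0) := by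
      intro z
      by_cases hcz : Az z t = a ∧ Hz z t = h
      · rw [if_pos hcz, if_pos hcz, if_pos hcz, hsummand z]
      · rw [if_neg hcz, if_neg hcz, if_neg hcz]; ring
    rw [Finset.sum_congr rfl (fun z _ => this z), Finset.sum_sub_distrib,
      ← Finset.sum_mul, ← hNd, ← hDd]
  rw [hLHS]
  field_simp

end Aux4

section Aux5

variable [∀ t, Nonempty (𝓐 t)] [∀ t, Nonempty (𝓛 t)] [Nonempty {y : ℝ // y ∈ 𝒴}]

/-- The Gateaux derivative of the sequential regressions `m_t` along the mixture path,
defined by the same downward recursion. -/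
noncomputable def DM (d : Policy 𝓐 𝓛) (p pt : Zspace 𝓐 𝓛 𝒴 → ℝ)
    (t : Fin τ) (sb : SbarN 𝓐 (t.val + 1)) (a : 𝓐 t) (h : Hist 𝓐 𝓛 t) : ℝ :=
  condExpP p t a h (fun z =>
    (pt z - p z) / p z * (integrand d p t sb z - mP d p t sb a h)) +
  condExpP p t a h (fun z =>
    if hlt : t.val + 1 < τ then
      DM d p pt ⟨t.val + 1, hlt⟩ (snoc (t := ⟨t.val + 1, hlt⟩) sb (Az z ⟨t.val + 1, hlt⟩))
        (d ⟨t.val + 1, hlt⟩ (snoc (t := ⟨t.val + 1, hlt⟩) sb (Az z ⟨t.val + 1, hlt⟩))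
          (Hz z ⟨t.val + 1, hlt⟩))
        (Hz z ⟨t.val + 1, hlt⟩)
    else 0)
termination_by τ - t.val
decreasing_by omega

variable {p pt : Zspace 𝓐 𝓛 𝒴 → ℝ}

lemma hasDerivAt_mP (d : Policy 𝓐 𝓛) (hp : ∀ z, 0 < p z) :
    ∀ (n : ℕ) (t : Fin τ), τ - t.val ≤ n → ∀ (sb : SbarN 𝓐 (t.val + 1)) (a : 𝓐 t)
      (h : Hist 𝓐 𝓛 t),
      HasDerivAt (fun ε : ℝ => mP d (fun z => (1 - ε) * p z + ε * pt z) t sb a h)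
        (DM d p pt t sb a h) 0 := by
  intro n
  induction n with
  | zero => intro t ht; exact absurd ht (by have := t.2; omega)
  | succ n ih =>
    intro t ht sb a h
    have hfun : (fun ε : ℝ => mP d (fun z => (1 - ε) * p z + ε * pt z) t sb a h)
        = fun ε : ℝ => condExpP (fun z => (1 - ε) * p z + ε * pt z) t a h
            (integrand d (fun z => (1 - ε) * p z + ε * pt z) t sb) := by
      funext ε; exact mP_eq d t sb a h
    rw [hfun]
    have hX : ∀ z : Zspace 𝓐 𝓛 𝒴, HasDerivAt
        (fun ε : ℝ => integrand d (fun z' => (1 - ε) * p z' + ε * pt z') t sb z)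
        (if hlt : t.val + 1 < τ then
          DM d p pt ⟨t.val + 1, hlt⟩
            (snoc (t := ⟨t.val + 1, hlt⟩) sb (Az z ⟨t.val + 1, hlt⟩))
            (d ⟨t.val + 1, hlt⟩ (snoc (t := ⟨t.val + 1, hlt⟩) sb (Az z ⟨t.val + 1, hlt⟩))
              (Hz z ⟨t.val + 1, hlt⟩))
            (Hz z ⟨t.val + 1, hlt⟩)
        else 0) 0 := by
      intro z
      by_cases hlt : t.val + 1 < τ
      · simp only [integrand, dif_pos hlt]
        exact ih ⟨t.val + 1, hlt⟩ (by simp; omega) _ _ _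
      · simp only [integrand, dif_neg hlt]
        exact hasDerivAt_const 0 _
    have hkey := hasDerivAt_condExpP (pt := pt) hp t a h
      (fun ε => integrand d (fun z' => (1 - ε) * p z' + ε * pt z') t sb) _ hX
    have hpe0 : (fun z : Zspace 𝓐 𝓛 𝒴 => (1 - (0:ℝ)) * p z + 0 * pt z) = p := by
      funext z; ring
    beta_reduce at hkey
    rw [hpe0] at hkey
    convert hkey using 1
    rw [DM, ← condExpP_add]
    congr 1
    funext z
    rw [mP_eq]

end Aux5

section Aux6

variable [∀ t, Nonempty (𝓐 t)] [∀ t, Nonempty (𝓛 t)] [Nonempty {y : ℝ // y ∈ 𝒴}]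
variable {p pt : Zspace 𝓐 𝓛 𝒴 → ℝ}

lemma hasDerivAt_ThetaP (hτ : 0 < τ) (d : Policy 𝓐 𝓛) (hp : ∀ z, 0 < p z) :
    HasDerivAt (fun ε : ℝ => ThetaP hτ d (fun z => (1 - ε) * p z + ε * pt z))
      (∑ z : Zspace 𝓐 𝓛 𝒴,
        ((pt z - p z) * qP d p ⟨0, hτ⟩ (emptySbar 𝓐) (Az z ⟨0, hτ⟩) (Hz z ⟨0, hτ⟩)
          + p z * DM d p pt ⟨0, hτ⟩ (snoc (t := ⟨0, hτ⟩) (emptySbar 𝓐) (Az z ⟨0, hτ⟩))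
              (d ⟨0, hτ⟩ (snoc (t := ⟨0, hτ⟩) (emptySbar 𝓐) (Az z ⟨0, hτ⟩)) (Hz z ⟨0, hτ⟩))
              (Hz z ⟨0, hτ⟩))) 0 := by
  have hterm : ∀ z : Zspace 𝓐 𝓛 𝒴, HasDerivAt
      (fun ε : ℝ => ((1 - ε) * p z + ε * pt z) *
        qP d (fun z' => (1 - ε) * p z' + ε * pt z') ⟨0, hτ⟩ (emptySbar 𝓐)
          (Az z ⟨0, hτ⟩) (Hz z ⟨0, hτ⟩))
      ((pt z - p z) * qP d p ⟨0, hτ⟩ (emptySbar 𝓐) (Az z ⟨0, hτ⟩) (Hz z ⟨0, hτ⟩)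
        + p z * DM d p pt ⟨0, hτ⟩ (snoc (t := ⟨0, hτ⟩) (emptySbar 𝓐) (Az z ⟨0, hτ⟩))
            (d ⟨0, hτ⟩ (snoc (t := ⟨0, hτ⟩) (emptySbar 𝓐) (Az z ⟨0, hτ⟩)) (Hz z ⟨0, hτ⟩))
            (Hz z ⟨0, hτ⟩)) 0 := by
    intro z
    have hq : HasDerivAt (fun ε : ℝ => qP d (fun z' => (1 - ε) * p z' + ε * pt z')
        ⟨0, hτ⟩ (emptySbar 𝓐) (Az z ⟨0, hτ⟩) (Hz z ⟨0, hτ⟩))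
        (DM d p pt ⟨0, hτ⟩ (snoc (t := ⟨0, hτ⟩) (emptySbar 𝓐) (Az z ⟨0, hτ⟩))
          (d ⟨0, hτ⟩ (snoc (t := ⟨0, hτ⟩) (emptySbar 𝓐) (Az z ⟨0, hτ⟩)) (Hz z ⟨0, hτ⟩))
          (Hz z ⟨0, hτ⟩)) 0 :=
      hasDerivAt_mP d hp τ ⟨0, hτ⟩ (by simp) _ _ _
    have hprod := (hasDerivAt_pe p pt z).mul hq
    have hpe0 : (fun z' : Zspace 𝓐 𝓛 𝒴 => (1 - (0:ℝ)) * p z' + 0 * pt z') = p := by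
      funext z'; ring
    rw [hpe0] at hprod
    refine hprod.congr_deriv ?_
    norm_num
  exact HasDerivAt.fun_sum fun z _ => hterm z

end Aux6

section Aux7

variable [∀ t, Nonempty (𝓐 t)] [∀ t, Nonempty (𝓛 t)] [Nonempty {y : ℝ // y ∈ 𝒴}]

/-- Partial indicator `D_{t,k}` (only factors for times `tp ≤ u ≤ k`). -/
noncomputable def DindT (d : Policy 𝓐 𝓛) (tp : ℕ) (k : Fin τ) (sbk : SbarN 𝓐 (k.val + 1))
    (z : Zspace 𝓐 𝓛 𝒴) : ℝ :=
  ∏ u : Fin τ,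
    if hu : tp ≤ u.val ∧ u.val ≤ k.val then
      (if Az z u = d u (restrictSb (Nat.succ_le_succ hu.2) sbk) (Hz z u) then 1 else 0)
    else 1

/-- Partial weight (only factors for times `tp ≤ u ≤ k`). -/
noncomputable def WT (p : Zspace 𝓐 𝓛 𝒴 → ℝ) (tp : ℕ) (k : Fin τ)
    (sbk : SbarN 𝓐 (k.val + 1)) (z : Zspace 𝓐 𝓛 𝒴) : ℝ :=
  ∏ u : Fin τ,
    if hu : tp ≤ u.val ∧ u.val ≤ k.val then
      gP p u (sbk ⟨u, Nat.lt_succ_of_le hu.2⟩) (Hz z u) / gP p u (Az z u) (Hz z u)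
    else 1

/-- The residual `q_{k+1} − m_k` evaluated at the natural value of `A_k`. -/
noncomputable def Body (d : Policy 𝓐 𝓛) (p : Zspace 𝓐 𝓛 𝒴 → ℝ) (k : Fin τ)
    (sbk : SbarN 𝓐 (k.val + 1)) (z : Zspace 𝓐 𝓛 𝒴) : ℝ :=
  qNextP d p k sbk z - mP d p k sbk (Az z k) (Hz z k)

/-- The tail of the pseudo-outcome starting from time `tp`. -/
noncomputable def Tail (d : Policy 𝓐 𝓛) (p : Zspace 𝓐 𝓛 𝒴 → ℝ) (tp : ℕ)
    (sb : SbarN 𝓐 tp) (z : Zspace 𝓐 𝓛 𝒴) : ℝ :=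
  ∑ k : Fin τ, if tp ≤ k.val then
    ∑ e : Ext 𝓐 tp k, DindT d tp k (mergeExt sb e) z * WT p tp k (mergeExt sb e) z *
      Body d p k (mergeExt sb e) z
  else 0

lemma DindT_zero (d : Policy 𝓐 𝓛) (k : Fin τ) (sbk : SbarN 𝓐 (k.val + 1))
    (z : Zspace 𝓐 𝓛 𝒴) : DindT d 0 k sbk z = DindP d k sbk z := by
  refine Finset.prod_congr rfl fun u _ => ?_
  by_cases h : u.val ≤ k.val
  · rw [dif_pos ⟨Nat.zero_le _, h⟩, dif_pos h]
  · rw [dif_neg (by tauto), dif_neg h]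

lemma WT_zero (p : Zspace 𝓐 𝓛 𝒴 → ℝ) (k : Fin τ) (sbk : SbarN 𝓐 (k.val + 1))
    (z : Zspace 𝓐 𝓛 𝒴) : WT p 0 k sbk z = weightP p k sbk z := by
  refine Finset.prod_congr rfl fun u _ => ?_
  by_cases h : u.val ≤ k.val
  · rw [dif_pos ⟨Nat.zero_le _, h⟩, dif_pos h]
  · rw [dif_neg (by tauto), dif_neg h]

lemma snoc_last {t : Fin τ} (sb : SbarN 𝓐 t.val) (a : 𝓐 t) (hlt : t.val < t.val + 1) :
    snoc sb a ⟨t, hlt⟩ = a := by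
  show dite _ _ _ = a
  rw [dif_pos rfl]
  exact eq_of_heq (cast_heq _ a)

lemma restrictSb_mergeExt {tp : ℕ} {k : Fin τ} (sb : SbarN 𝓐 tp) (e : Ext 𝓐 tp k)
    (h : tp ≤ k.val + 1) : restrictSb h (mergeExt sb e) = sb := by
  funext u
  show dite _ _ _ = _
  rw [dif_pos u.2]

/-- Combining a single new value with an extension from `t+1`. -/
def pairExt {t k : Fin τ} (s : 𝓐 t) (e' : Ext 𝓐 (t.val + 1) k) : Ext 𝓐 t.val k :=
  fun u => if h : u.1 = t then cast (congrArg 𝓐 h).symm s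
    else e' ⟨u.1, ⟨Nat.lt_of_le_of_ne u.2.1 (fun hv => h (Fin.ext hv.symm)), u.2.2⟩⟩

lemma mergeExt_pairExt {t k : Fin τ} (sb : SbarN 𝓐 t.val) (s : 𝓐 t)
    (e' : Ext 𝓐 (t.val + 1) k) :
    mergeExt sb (pairExt s e') = mergeExt (snoc sb s) e' := by
  funext u
  show dite _ _ _ = dite _ _ _
  rcases lt_trichotomy u.1.val t.val with h | h | h
  · rw [dif_pos h, dif_pos (Nat.lt_succ_of_lt h)]
    show _ = dite _ _ _
    rw [dif_neg (fun hv => absurd (show u.1.val = t.val from congrArg Fin.val hv) (by omega))]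
  · rw [dif_neg (by omega), dif_pos (by omega)]
    show dite _ _ _ = dite _ _ _
    have hu : u.1 = t := Fin.ext h
    rw [dif_pos hu, dif_pos hu]
  · rw [dif_neg (by omega), dif_neg (by omega)]
    show dite _ _ _ = _
    rw [dif_neg (fun hv => absurd (show u.1.val = t.val from congrArg Fin.val hv) (by omega))]

/-- A single-step extension at time `t` itself. -/
def singleExt {t : Fin τ} (s : 𝓐 t) : Ext 𝓐 t.val t :=
  fun u => cast (congrArg 𝓐 (show u.1 = t from Fin.ext (le_antisymm u.2.2 u.2.1))).symm s

end Aux7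

section Aux8

variable [∀ t, Nonempty (𝓐 t)] [∀ t, Nonempty (𝓛 t)] [Nonempty {y : ℝ // y ∈ 𝒴}]

lemma restrictSb_self {tp : ℕ} (h : tp ≤ tp) (sb : SbarN 𝓐 tp) : restrictSb h sb = sb :=
  funext fun _ => rfl

lemma mergeExt_self {k : Fin τ} (sb' : SbarN 𝓐 (k.val + 1)) (e' : Ext 𝓐 (k.val + 1) k) :
    mergeExt sb' e' = sb' := by
  funext u
  show dite _ _ _ = _
  rw [dif_pos u.2]

lemma mergeExt_apply_lt {tp : ℕ} {k : Fin τ} (sb' : SbarN 𝓐 tp) (e' : Ext 𝓐 tp k)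
    (u : {s : Fin τ // s.val < k.val + 1}) (h : u.1.val < tp) :
    mergeExt sb' e' u = sb' ⟨u.1, h⟩ := by
  show dite _ _ _ = _
  rw [dif_pos h]

lemma DindT_one (d : Policy 𝓐 𝓛) {tp : ℕ} {k : Fin τ} (h : k.val < tp)
    (sbk : SbarN 𝓐 (k.val + 1)) (z : Zspace 𝓐 𝓛 𝒴) : DindT d tp k sbk z = 1 :=
  Finset.prod_eq_one fun u _ => dif_neg (by omega)

lemma WT_one (p : Zspace 𝓐 𝓛 𝒴 → ℝ) {tp : ℕ} {k : Fin τ} (h : k.val < tp)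
    (sbk : SbarN 𝓐 (k.val + 1)) (z : Zspace 𝓐 𝓛 𝒴) : WT p tp k sbk z = 1 :=
  Finset.prod_eq_one fun u _ => dif_neg (by omega)

lemma DindT_succ (d : Policy 𝓐 𝓛) {t k : Fin τ} (htk : t.val ≤ k.val)
    (sbk : SbarN 𝓐 (k.val + 1)) (z : Zspace 𝓐 𝓛 𝒴) :
    DindT d t.val k sbk z
      = (if Az z t = d t (restrictSb (Nat.succ_le_succ htk) sbk) (Hz z t) then 1 else 0)
        * DindT d (t.val + 1) k sbk z := by
  rw [DindT, DindT, Fintype.prod_eq_mul_prod_compl t, Fintype.prod_eq_mul_prod_compl t]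
  rw [dif_pos ⟨le_refl _, htk⟩, dif_neg (by omega)]
  rw [one_mul]
  congr 1
  refine Finset.prod_congr rfl fun u hu => ?_
  have hut : u ≠ t := by simpa using hu
  have hut' : u.val ≠ t.val := fun hv => hut (Fin.ext hv)
  by_cases hc : t.val + 1 ≤ u.val ∧ u.val ≤ k.val
  · rw [dif_pos ⟨by omega, hc.2⟩, dif_pos hc]
  · rw [dif_neg (by omega), dif_neg hc]

lemma WT_succ (p : Zspace 𝓐 𝓛 𝒴 → ℝ) {t k : Fin τ} (htk : t.val ≤ k.val)
    (sbk : SbarN 𝓐 (k.val + 1)) (z : Zspace 𝓐 𝓛 𝒴) :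
    WT p t.val k sbk z
      = (gP p t (sbk ⟨t, Nat.lt_succ_of_le htk⟩) (Hz z t) / gP p t (Az z t) (Hz z t))
        * WT p (t.val + 1) k sbk z := by
  rw [WT, WT, Fintype.prod_eq_mul_prod_compl t, Fintype.prod_eq_mul_prod_compl t]
  rw [dif_pos ⟨le_refl _, htk⟩, dif_neg (by omega)]
  rw [one_mul]
  congr 1
  refine Finset.prod_congr rfl fun u hu => ?_
  have hut : u ≠ t := by simpa using hu
  have hut' : u.val ≠ t.val := fun hv => hut (Fin.ext hv)
  by_cases hc : t.val + 1 ≤ u.val ∧ u.val ≤ k.val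
  · rw [dif_pos ⟨by omega, hc.2⟩, dif_pos hc]
  · rw [dif_neg (by omega), dif_neg hc]

lemma pairExt_bijective {t k : Fin τ} (htk : t.val ≤ k.val) :
    Function.Bijective (fun se : 𝓐 t × Ext 𝓐 (t.val + 1) k => pairExt se.1 se.2) := by
  rw [Function.bijective_iff_has_inverse]
  refine ⟨fun e => (e ⟨t, ⟨le_refl _, htk⟩⟩,
    fun u => e ⟨u.1, ⟨Nat.le_of_succ_le u.2.1, u.2.2⟩⟩), ?_, ?_⟩
  · rintro ⟨s, e'⟩
    refine Prod.ext ?_ ?_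
    · show dite _ _ _ = s
      rw [dif_pos rfl]
      exact eq_of_heq (cast_heq _ s)
    · funext u
      show dite _ _ _ = _
      rw [dif_neg (fun hv => absurd (show u.1.val = t.val from congrArg Fin.val hv)
        (by have := u.2.1; omega))]
  · intro e
    funext u
    show dite _ _ _ = _
    by_cases h : u.1 = t
    · rw [dif_pos h]
      rcases u with ⟨u1, hu⟩
      have h' : u1 = t := h
      subst h'
      exact eq_of_heq (cast_heq _ _)
    · rw [dif_neg h]

lemma sum_pairExt {t k : Fin τ} (htk : t.val ≤ k.val) (F : Ext 𝓐 t.val k → ℝ) :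
    ∑ s : 𝓐 t, ∑ e' : Ext 𝓐 (t.val + 1) k, F (pairExt s e') = ∑ e : Ext 𝓐 t.val k, F e := by
  have h1 : ∑ se : 𝓐 t × Ext 𝓐 (t.val + 1) k, F (pairExt se.1 se.2)
      = ∑ s : 𝓐 t, ∑ e' : Ext 𝓐 (t.val + 1) k, F (pairExt s e') := Fintype.sum_prod_type _
  rw [← h1]
  exact Fintype.sum_bijective _ (pairExt_bijective htk) _ _ (fun se => rfl)

end Aux8

section Aux9

variable [∀ t, Nonempty (𝓐 t)] [∀ t, Nonempty (𝓛 t)] [Nonempty {y : ℝ // y ∈ 𝒴}]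
variable (d : Policy 𝓐 𝓛) (p : Zspace 𝓐 𝓛 𝒴 → ℝ)

lemma tail_term_succ {t k : Fin τ} (htk : t.val + 1 ≤ k.val) (sb : SbarN 𝓐 t.val)
    (z : Zspace 𝓐 𝓛 𝒴) :
    (∑ e : Ext 𝓐 t.val k, DindT d t.val k (mergeExt sb e) z * WT p t.val k (mergeExt sb e) z
        * Body d p k (mergeExt sb e) z)
      = ∑ s : 𝓐 t, (if Az z t = d t (snoc sb s) (Hz z t) then (1:ℝ) else 0)
          * (gP p t s (Hz z t) / gP p t (Az z t) (Hz z t))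
          * ∑ e' : Ext 𝓐 (t.val + 1) k,
              DindT d (t.val + 1) k (mergeExt (snoc sb s) e') z
                * WT p (t.val + 1) k (mergeExt (snoc sb s) e') z
                * Body d p k (mergeExt (snoc sb s) e') z := by
  have htk0 : t.val ≤ k.val := Nat.le_of_succ_le htk
  rw [← sum_pairExt htk0]
  refine Finset.sum_congr rfl fun s _ => ?_
  rw [Finset.mul_sum]
  refine Finset.sum_congr rfl fun e' _ => ?_
  rw [mergeExt_pairExt, DindT_succ d htk0, WT_succ p htk0,
    restrictSb_mergeExt (snoc sb s) e' (Nat.succ_le_succ htk0),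
    mergeExt_apply_lt (snoc sb s) e' _ (Nat.lt_succ_self t.val), snoc_last]
  ring

lemma tail_term_self {t : Fin τ} (sb : SbarN 𝓐 t.val) (z : Zspace 𝓐 𝓛 𝒴) :
    (∑ e : Ext 𝓐 t.val t, DindT d t.val t (mergeExt sb e) z * WT p t.val t (mergeExt sb e) z
        * Body d p t (mergeExt sb e) z)
      = ∑ s : 𝓐 t, (if Az z t = d t (snoc sb s) (Hz z t) then (1:ℝ) else 0)
          * (gP p t s (Hz z t) / gP p t (Az z t) (Hz z t))
          * Body d p t (snoc sb s) z := by
  haveI : IsEmpty {s : Fin τ // t.val + 1 ≤ s.val ∧ s.val ≤ t.val} :=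
    ⟨fun u => by have := u.2; omega⟩
  rw [← sum_pairExt (le_refl t.val)]
  refine Finset.sum_congr rfl fun s _ => ?_
  have hcongr : ∀ e' : Ext 𝓐 (t.val + 1) t,
      DindT d t.val t (mergeExt sb (pairExt s e')) z
          * WT p t.val t (mergeExt sb (pairExt s e')) z
          * Body d p t (mergeExt sb (pairExt s e')) z
        = (if Az z t = d t (snoc sb s) (Hz z t) then (1:ℝ) else 0)
          * (gP p t s (Hz z t) / gP p t (Az z t) (Hz z t))
          * Body d p t (snoc sb s) z := by
    intro e'
    rw [mergeExt_pairExt, mergeExt_self, DindT_succ d (le_refl t.val),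
      WT_succ p (le_refl t.val), DindT_one d (Nat.lt_succ_self t.val),
      WT_one p (Nat.lt_succ_self t.val), restrictSb_self, snoc_last]
    ring
  rw [Finset.sum_congr rfl fun e' _ => hcongr e', Finset.sum_const, Finset.card_univ,
    Fintype.card_unique, one_smul]

lemma Tail_last {t : Fin τ} (ht1 : ¬ t.val + 1 < τ) (sb : SbarN 𝓐 t.val)
    (z : Zspace 𝓐 𝓛 𝒴) :
    Tail d p t.val sb z
      = ∑ s : 𝓐 t, (if Az z t = d t (snoc sb s) (Hz z t) then (1:ℝ) else 0)
          * (gP p t s (Hz z t) / gP p t (Az z t) (Hz z t))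
          * Body d p t (snoc sb s) z := by
  rw [Tail]
  rw [Finset.sum_eq_single t]
  · rw [if_pos (le_refl t.val), tail_term_self]
  · intro k _ hk
    rw [if_neg ?_]
    intro hc
    exact hk (Fin.ext (by have := k.2; omega))
  · intro h
    exact absurd (Finset.mem_univ t) h

lemma Tail_succ {t : Fin τ} (ht1 : t.val + 1 < τ) (sb : SbarN 𝓐 t.val)
    (z : Zspace 𝓐 𝓛 𝒴) :
    Tail d p t.val sb z
      = (∑ s : 𝓐 t, (if Az z t = d t (snoc sb s) (Hz z t) then (1:ℝ) else 0)
          * (gP p t s (Hz z t) / gP p t (Az z t) (Hz z t))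
          * Body d p t (snoc sb s) z)
        + ∑ s : 𝓐 t, (if Az z t = d t (snoc sb s) (Hz z t) then (1:ℝ) else 0)
          * (gP p t s (Hz z t) / gP p t (Az z t) (Hz z t))
          * Tail d p (t.val + 1) (snoc sb s) z := by
  have hk : ∀ k : Fin τ,
      (if t.val ≤ k.val then
        ∑ e : Ext 𝓐 t.val k, DindT d t.val k (mergeExt sb e) z * WT p t.val k (mergeExt sb e) z
          * Body d p k (mergeExt sb e) z
      else 0)
        = (if k = t then
            ∑ s : 𝓐 t, (if Az z t = d t (snoc sb s) (Hz z t) then (1:ℝ) else 0)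
              * (gP p t s (Hz z t) / gP p t (Az z t) (Hz z t))
              * Body d p t (snoc sb s) z
          else 0)
          + ∑ s : 𝓐 t, (if Az z t = d t (snoc sb s) (Hz z t) then (1:ℝ) else 0)
              * (gP p t s (Hz z t) / gP p t (Az z t) (Hz z t))
              * (if t.val + 1 ≤ k.val then
                  ∑ e' : Ext 𝓐 (t.val + 1) k,
                    DindT d (t.val + 1) k (mergeExt (snoc sb s) e') z
                      * WT p (t.val + 1) k (mergeExt (snoc sb s) e') z
                      * Body d p k (mergeExt (snoc sb s) e') z
                else 0) := by
    intro k
    rcases lt_trichotomy k.val t.val with h | h | h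
    · have h2 : ¬ t.val ≤ k.val := by omega
      have h3 : ¬ t.val + 1 ≤ k.val := by omega
      have h4 : k ≠ t := fun hc => by rw [hc] at h; omega
      rw [if_neg h2, if_neg h4]
      simp [h3]
    · have hkt : k = t := Fin.ext h
      subst hkt
      rw [if_pos (le_refl _), if_pos rfl, tail_term_self]
      have hz : ∀ s : 𝓐 k, (if k.val + 1 ≤ k.val then
          ∑ e' : Ext 𝓐 (k.val + 1) k,
            DindT d (k.val + 1) k (mergeExt (snoc sb s) e') z
              * WT p (k.val + 1) k (mergeExt (snoc sb s) e') z
              * Body d p k (mergeExt (snoc sb s) e') z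
        else 0) = 0 := by
        intro s; rw [if_neg (by omega)]
      simp only [hz, mul_zero, Finset.sum_const_zero, add_zero]
    · rw [if_pos (show t.val ≤ k.val by omega),
        if_neg (show k ≠ t from fun hc => by rw [hc] at h; omega), zero_add,
        tail_term_succ d p (show t.val + 1 ≤ k.val by omega)]
      refine Finset.sum_congr rfl fun s _ => ?_
      rw [if_pos (show t.val + 1 ≤ k.val by omega)]
  rw [Tail, Finset.sum_congr rfl fun k _ => hk k, Finset.sum_add_distrib]
  congr 1
  · rw [Finset.sum_ite_eq' Finset.univ t]
    rw [if_pos (Finset.mem_univ t)]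
  · rw [Finset.sum_comm]
    refine Finset.sum_congr rfl fun s _ => ?_
    rw [← Finset.mul_sum, Tail]
-- to be continued

end Aux9

section Aux10

variable [∀ t, Nonempty (𝓐 t)] [∀ t, Nonempty (𝓛 t)] [Nonempty {y : ℝ // y ∈ 𝒴}]
variable {p : Zspace 𝓐 𝓛 𝒴 → ℝ}

lemma sum_fiber_eq (t : Fin τ) (a : 𝓐 t) (h : Hist 𝓐 𝓛 t) (f : Zspace 𝓐 𝓛 𝒴 → ℝ) :
    ∑ z ∈ Finset.univ.filter (fun z : Zspace 𝓐 𝓛 𝒴 => (Az z t, Hz z t) = (a, h)), f z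
      = ∑ z : Zspace 𝓐 𝓛 𝒴, if Az z t = a ∧ Hz z t = h then f z else 0 := by
  rw [Finset.sum_filter]
  refine Finset.sum_congr rfl fun z _ => ?_
  by_cases hc : Az z t = a ∧ Hz z t = h
  · rw [if_pos (by simp [hc.1, hc.2]), if_pos hc]
  · rw [if_neg (by simpa [Prod.mk.injEq] using hc), if_neg hc]

lemma grouping (hp : ∀ z, 0 < p z) (t : Fin τ) (Ω : Hist 𝓐 𝓛 t → ℝ)
    (π : 𝓐 t → Hist 𝓐 𝓛 t → 𝓐 t) (F : 𝓐 t → Hist 𝓐 𝓛 t → Zspace 𝓐 𝓛 𝒴 → ℝ) :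
    ∑ z : Zspace 𝓐 𝓛 𝒴, p z * Ω (Hz z t)
        * condExpP p t (π (Az z t) (Hz z t)) (Hz z t) (F (Az z t) (Hz z t))
      = ∑ s : 𝓐 t, ∑ z : Zspace 𝓐 𝓛 𝒴,
          (if Az z t = π s (Hz z t) then (1:ℝ) else 0)
            * (gP p t s (Hz z t) / gP p t (Az z t) (Hz z t))
            * Ω (Hz z t) * (p z * F s (Hz z t) z) := by
  classical
  -- abbreviations
  set den : (a : 𝓐 t) → Hist 𝓐 𝓛 t → ℝ :=
    fun a h => ∑ z : Zspace 𝓐 𝓛 𝒴, if Az z t = a ∧ Hz z t = h then p z else 0 with hden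
  set Nf : (s a : 𝓐 t) → Hist 𝓐 𝓛 t → ℝ :=
    fun s a h => ∑ z : Zspace 𝓐 𝓛 𝒴, if Az z t = a ∧ Hz z t = h then p z * F s h z else 0
    with hNf
  -- LHS fiberwise
  have hL : ∑ z : Zspace 𝓐 𝓛 𝒴, p z * Ω (Hz z t)
      * condExpP p t (π (Az z t) (Hz z t)) (Hz z t) (F (Az z t) (Hz z t))
      = ∑ b : 𝓐 t × Hist 𝓐 𝓛 t,
          den b.1 b.2 * (Ω b.2 * condExpP p t (π b.1 b.2) b.2 (F b.1 b.2)) := by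
    rw [← Finset.sum_fiberwise Finset.univ (fun z : Zspace 𝓐 𝓛 𝒴 => (Az z t, Hz z t))]
    refine Finset.sum_congr rfl fun b _ => ?_
    obtain ⟨a, h⟩ := b
    have hcong : ∀ z ∈ Finset.univ.filter
        (fun z : Zspace 𝓐 𝓛 𝒴 => (Az z t, Hz z t) = (a, h)),
        p z * Ω (Hz z t) * condExpP p t (π (Az z t) (Hz z t)) (Hz z t) (F (Az z t) (Hz z t))
          = p z * (Ω h * condExpP p t (π a h) h (F a h)) := by
      intro z hz
      rw [Finset.mem_filter] at hz
      have hA : Az z t = a := (Prod.mk.injEq _ _ _ _ ▸ hz.2).1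
      have hH : Hz z t = h := (Prod.mk.injEq _ _ _ _ ▸ hz.2).2
      rw [hA, hH]; ring
    rw [Finset.sum_congr rfl hcong, ← Finset.sum_mul, sum_fiber_eq]
  -- RHS fiberwise
  have hR : ∀ s : 𝓐 t, ∑ z : Zspace 𝓐 𝓛 𝒴,
      (if Az z t = π s (Hz z t) then (1:ℝ) else 0)
        * (gP p t s (Hz z t) / gP p t (Az z t) (Hz z t))
        * Ω (Hz z t) * (p z * F s (Hz z t) z)
      = ∑ b : 𝓐 t × Hist 𝓐 𝓛 t,
          (if b.1 = π s b.2 then (1:ℝ) else 0)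
            * (gP p t s b.2 / gP p t b.1 b.2) * Ω b.2 * Nf s b.1 b.2 := by
    intro s
    rw [← Finset.sum_fiberwise Finset.univ (fun z : Zspace 𝓐 𝓛 𝒴 => (Az z t, Hz z t))]
    refine Finset.sum_congr rfl fun b _ => ?_
    obtain ⟨a, h⟩ := b
    have hcong : ∀ z ∈ Finset.univ.filter
        (fun z : Zspace 𝓐 𝓛 𝒴 => (Az z t, Hz z t) = (a, h)),
        (if Az z t = π s (Hz z t) then (1:ℝ) else 0)
          * (gP p t s (Hz z t) / gP p t (Az z t) (Hz z t))
          * Ω (Hz z t) * (p z * F s (Hz z t) z)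
        = ((if a = π s h then (1:ℝ) else 0) * (gP p t s h / gP p t a h) * Ω h)
            * (p z * F s h z) := by
      intro z hz
      rw [Finset.mem_filter] at hz
      have hA : Az z t = a := (Prod.mk.injEq _ _ _ _ ▸ hz.2).1
      have hH : Hz z t = h := (Prod.mk.injEq _ _ _ _ ▸ hz.2).2
      rw [hA, hH]
    rw [Finset.sum_congr rfl hcong, ← Finset.mul_sum, sum_fiber_eq]
  rw [hL, Finset.sum_congr rfl fun s _ => hR s]
  -- collapse the indicator sums
  have hcollapse : ∀ s : 𝓐 t,
      (∑ b : 𝓐 t × Hist 𝓐 𝓛 t,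
        (if b.1 = π s b.2 then (1:ℝ) else 0)
          * (gP p t s b.2 / gP p t b.1 b.2) * Ω b.2 * Nf s b.1 b.2)
        = ∑ h : Hist 𝓐 𝓛 t,
            (gP p t s h / gP p t (π s h) h) * Ω h * Nf s (π s h) h := by
    intro s
    rw [Fintype.sum_prod_type]
    rw [Finset.sum_comm]
    refine Finset.sum_congr rfl fun h _ => ?_
    have : ∀ a : 𝓐 t,
        (if a = π s h then (1:ℝ) else 0) * (gP p t s h / gP p t a h) * Ω h * Nf s a h
          = if a = π s h then (gP p t s h / gP p t a h) * Ω h * Nf s a h else 0 := by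
      intro a; split_ifs <;> ring
    rw [Finset.sum_congr rfl fun a _ => this a, Finset.sum_ite_eq' Finset.univ (π s h)]
    rw [if_pos (Finset.mem_univ _)]
  rw [Finset.sum_congr rfl fun s _ => hcollapse s]
  -- identify the two double sums
  rw [Fintype.sum_prod_type]
  refine Finset.sum_congr rfl fun a _ => Finset.sum_congr rfl fun h _ => ?_
  have hdg : den a h = gP p t a h * (∑ z : Zspace 𝓐 𝓛 𝒴, if Hz z t = h then p z else 0) :=
    den_eq_gP_mul hp t a h
  have hdg' : den (π a h) h
      = gP p t (π a h) h * (∑ z : Zspace 𝓐 𝓛 𝒴, if Hz z t = h then p z else 0) :=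
    den_eq_gP_mul hp t (π a h) h
  have hcE : condExpP p t (π a h) h (F a h) = Nf a (π a h) h / den (π a h) h := rfl
  rw [hcE, hdg, hdg']
  have h1 : gP p t (π a h) h ≠ 0 := (gP_pos hp t (π a h) h).ne'
  have h2 : (∑ z : Zspace 𝓐 𝓛 𝒴, if Hz z t = h then p z else 0) ≠ 0 :=
    (denH_pos hp t h).ne'
  field_simp

end Aux10

section Aux11

variable [∀ t, Nonempty (𝓐 t)] [∀ t, Nonempty (𝓛 t)] [Nonempty {y : ℝ // y ∈ 𝒴}]
variable {p pt : Zspace 𝓐 𝓛 𝒴 → ℝ}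

/-- Restriction of a longer history to a shorter one. -/
def restrH {t t' : Fin τ} (htt' : t ≤ t') (h' : Hist 𝓐 𝓛 t') : Hist 𝓐 𝓛 t :=
  (fun u => h'.1 ⟨u.1, le_trans u.2 htt'⟩, fun u => h'.2 ⟨u.1, lt_of_lt_of_le u.2 htt'⟩)

lemma main_claim (d : Policy 𝓐 𝓛) (hp : ∀ z, 0 < p z) :
    ∀ (n : ℕ) (t : Fin τ), τ - t.val ≤ n → ∀ (sb : SbarN 𝓐 t.val) (Ω : Hist 𝓐 𝓛 t → ℝ),
      ∑ z : Zspace 𝓐 𝓛 𝒴, p z * Ω (Hz z t)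
          * DM d p pt t (snoc sb (Az z t)) (d t (snoc sb (Az z t)) (Hz z t)) (Hz z t)
        = ∑ z : Zspace 𝓐 𝓛 𝒴, (pt z - p z) * Ω (Hz z t) * Tail d p t.val sb z := by
  intro n
  induction n with
  | zero => intro t ht; exact absurd ht (by have := t.2; omega)
  | succ n ih =>
    intro t ht sb Ω
    have hDM : ∀ (a : 𝓐 t) (h : Hist 𝓐 𝓛 t), DM d p pt t (snoc sb a) (d t (snoc sb a) h) h
        = condExpP p t (d t (snoc sb a) h) h (fun z' =>
            (pt z' - p z') / p z'
              * (integrand d p t (snoc sb a) z'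
                  - mP d p t (snoc sb a) (d t (snoc sb a) h) h)
            + (if hlt : t.val + 1 < τ then
                DM d p pt ⟨t.val + 1, hlt⟩
                  (snoc (t := ⟨t.val + 1, hlt⟩) (snoc sb a) (Az z' ⟨t.val + 1, hlt⟩))
                  (d ⟨t.val + 1, hlt⟩
                    (snoc (t := ⟨t.val + 1, hlt⟩) (snoc sb a) (Az z' ⟨t.val + 1, hlt⟩))
                    (Hz z' ⟨t.val + 1, hlt⟩))
                  (Hz z' ⟨t.val + 1, hlt⟩)
              else 0)) := by
      intro a h
      rw [DM, condExpP_add]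
    have hG := grouping (p := p) hp t Ω (fun a h => d t (snoc sb a) h)
      (fun a h => fun z' =>
        (pt z' - p z') / p z'
          * (integrand d p t (snoc sb a) z'
              - mP d p t (snoc sb a) (d t (snoc sb a) h) h)
        + (if hlt : t.val + 1 < τ then
            DM d p pt ⟨t.val + 1, hlt⟩
              (snoc (t := ⟨t.val + 1, hlt⟩) (snoc sb a) (Az z' ⟨t.val + 1, hlt⟩))
              (d ⟨t.val + 1, hlt⟩
                (snoc (t := ⟨t.val + 1, hlt⟩) (snoc sb a) (Az z' ⟨t.val + 1, hlt⟩))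
                (Hz z' ⟨t.val + 1, hlt⟩))
              (Hz z' ⟨t.val + 1, hlt⟩)
          else 0))
    refine Eq.trans ?_ (Eq.trans hG ?_)
    · exact Finset.sum_congr rfl fun z _ => by rw [hDM (Az z t) (Hz z t)]
    clear hG hDM
    -- now: ∑ s ∑ z ind * ratio * Ω * (p z * F s (Hz z t) z) = ∑ z δ z * Ω * Tail
    -- step A: expand the summand into the "body" part and the "recursive" part
    have hsplit : ∀ (s : 𝓐 t) (z : Zspace 𝓐 𝓛 𝒴),
        (if Az z t = d t (snoc sb s) (Hz z t) then (1:ℝ) else 0)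
          * (gP p t s (Hz z t) / gP p t (Az z t) (Hz z t)) * Ω (Hz z t)
          * (p z * ((pt z - p z) / p z
              * (integrand d p t (snoc sb s) z
                  - mP d p t (snoc sb s) (d t (snoc sb s) (Hz z t)) (Hz z t))
            + (if hlt : t.val + 1 < τ then
                DM d p pt ⟨t.val + 1, hlt⟩
                  (snoc (t := ⟨t.val + 1, hlt⟩) (snoc sb s) (Az z ⟨t.val + 1, hlt⟩))
                  (d ⟨t.val + 1, hlt⟩
                    (snoc (t := ⟨t.val + 1, hlt⟩) (snoc sb s) (Az z ⟨t.val + 1, hlt⟩))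
                    (Hz z ⟨t.val + 1, hlt⟩))
                  (Hz z ⟨t.val + 1, hlt⟩)
              else 0)))
        = (if Az z t = d t (snoc sb s) (Hz z t) then (1:ℝ) else 0)
            * (gP p t s (Hz z t) / gP p t (Az z t) (Hz z t)) * Ω (Hz z t)
            * ((pt z - p z) * Body d p t (snoc sb s) z)
          + (if Az z t = d t (snoc sb s) (Hz z t) then (1:ℝ) else 0)
            * (gP p t s (Hz z t) / gP p t (Az z t) (Hz z t)) * Ω (Hz z t)
            * (p z * (if hlt : t.val + 1 < τ then
                DM d p pt ⟨t.val + 1, hlt⟩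
                  (snoc (t := ⟨t.val + 1, hlt⟩) (snoc sb s) (Az z ⟨t.val + 1, hlt⟩))
                  (d ⟨t.val + 1, hlt⟩
                    (snoc (t := ⟨t.val + 1, hlt⟩) (snoc sb s) (Az z ⟨t.val + 1, hlt⟩))
                    (Hz z ⟨t.val + 1, hlt⟩))
                  (Hz z ⟨t.val + 1, hlt⟩)
              else 0)) := by
      intro s z
      by_cases hlt : t.val + 1 < τ
      · simp only [dif_pos hlt]
        by_cases hc : Az z t = d t (snoc sb s) (Hz z t)
        · rw [if_pos hc, Body, ← integrand_eq_qNextP, ← hc]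
          have hpz := (hp z).ne'
          field_simp
          try ring
        · rw [if_neg hc]; ring
      · simp only [dif_neg hlt]
        by_cases hc : Az z t = d t (snoc sb s) (Hz z t)
        · rw [if_pos hc, Body, ← integrand_eq_qNextP, ← hc]
          have hpz := (hp z).ne'
          field_simp
          try ring
        · rw [if_neg hc]; ring
    rw [Finset.sum_congr rfl fun s _ =>
      Finset.sum_congr rfl fun z _ => hsplit s z]
    rw [Finset.sum_congr rfl fun s (_ : s ∈ Finset.univ) => Finset.sum_add_distrib,
      Finset.sum_add_distrib]
    by_cases hlt : t.val + 1 < τ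
    · -- recursive case
      have hrec : ∀ s : 𝓐 t,
          (∑ z : Zspace 𝓐 𝓛 𝒴,
            (if Az z t = d t (snoc sb s) (Hz z t) then (1:ℝ) else 0)
              * (gP p t s (Hz z t) / gP p t (Az z t) (Hz z t)) * Ω (Hz z t)
              * (p z * (if hlt' : t.val + 1 < τ then
                  DM d p pt ⟨t.val + 1, hlt'⟩
                    (snoc (t := ⟨t.val + 1, hlt'⟩) (snoc sb s) (Az z ⟨t.val + 1, hlt'⟩))
                    (d ⟨t.val + 1, hlt'⟩
                      (snoc (t := ⟨t.val + 1, hlt'⟩) (snoc sb s) (Az z ⟨t.val + 1, hlt'⟩))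
                      (Hz z ⟨t.val + 1, hlt'⟩))
                    (Hz z ⟨t.val + 1, hlt'⟩)
                else 0)))
          = ∑ z : Zspace 𝓐 𝓛 𝒴, (pt z - p z)
              * ((if Az z t = d t (snoc sb s) (Hz z t) then (1:ℝ) else 0)
                  * (gP p t s (Hz z t) / gP p t (Az z t) (Hz z t)) * Ω (Hz z t))
              * Tail d p (t.val + 1) (snoc sb s) z := by
        intro s
        have hIH := ih ⟨t.val + 1, hlt⟩ (show τ - (t.val + 1) ≤ n by omega) (snoc sb s)
          (fun h' : Hist 𝓐 𝓛 ⟨t.val + 1, hlt⟩ =>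
            (if h'.2 ⟨t, Nat.lt_succ_self t.val⟩
                = d t (snoc sb s) (restrH (Nat.le_succ t.val) h') then (1:ℝ) else 0)
              * (gP p t s (restrH (Nat.le_succ t.val) h')
                  / gP p t (h'.2 ⟨t, Nat.lt_succ_self t.val⟩) (restrH (Nat.le_succ t.val) h'))
              * Ω (restrH (Nat.le_succ t.val) h'))
        refine Eq.trans ?_ (Eq.trans hIH ?_)
        · refine Finset.sum_congr rfl fun z _ => ?_
          rw [dif_pos hlt]
          show _ = p z * ((if Az z t = d t (snoc sb s) (Hz z t) then (1:ℝ) else 0)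
            * (gP p t s (Hz z t) / gP p t (Az z t) (Hz z t)) * Ω (Hz z t)) * _
          ring
        · refine Finset.sum_congr rfl fun z _ => ?_
          show (pt z - p z) * ((if Az z t = d t (snoc sb s) (Hz z t) then (1:ℝ) else 0)
            * (gP p t s (Hz z t) / gP p t (Az z t) (Hz z t)) * Ω (Hz z t)) * _ = _
          rfl
      rw [Finset.sum_congr rfl fun s (_ : s ∈ Finset.univ) => hrec s]
      -- now assemble with Tail_succ
      have hRHS : ∀ z : Zspace 𝓐 𝓛 𝒴,
          (pt z - p z) * Ω (Hz z t) * Tail d p t.val sb z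
            = (∑ s : 𝓐 t, (if Az z t = d t (snoc sb s) (Hz z t) then (1:ℝ) else 0)
                * (gP p t s (Hz z t) / gP p t (Az z t) (Hz z t)) * Ω (Hz z t)
                * ((pt z - p z) * Body d p t (snoc sb s) z))
              + (∑ s : 𝓐 t, (pt z - p z)
                  * ((if Az z t = d t (snoc sb s) (Hz z t) then (1:ℝ) else 0)
                      * (gP p t s (Hz z t) / gP p t (Az z t) (Hz z t)) * Ω (Hz z t))
                  * Tail d p (t.val + 1) (snoc sb s) z) := by
        intro z
        rw [Tail_succ d p hlt sb z, mul_add, Finset.mul_sum, Finset.mul_sum]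
        congr 1
        · refine Finset.sum_congr rfl fun s _ => ?_; ring
        · refine Finset.sum_congr rfl fun s _ => ?_; ring
      rw [Finset.sum_congr rfl fun z (_ : z ∈ Finset.univ) => hRHS z,
        Finset.sum_add_distrib]
      congr 1
      · rw [Finset.sum_comm]
      · rw [Finset.sum_comm]
    · -- terminal case
      have hzero : ∀ (s : 𝓐 t) (z : Zspace 𝓐 𝓛 𝒴),
          (if Az z t = d t (snoc sb s) (Hz z t) then (1:ℝ) else 0)
            * (gP p t s (Hz z t) / gP p t (Az z t) (Hz z t)) * Ω (Hz z t)
            * (p z * (if hlt' : t.val + 1 < τ then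
                DM d p pt ⟨t.val + 1, hlt'⟩
                  (snoc (t := ⟨t.val + 1, hlt'⟩) (snoc sb s) (Az z ⟨t.val + 1, hlt'⟩))
                  (d ⟨t.val + 1, hlt'⟩
                    (snoc (t := ⟨t.val + 1, hlt'⟩) (snoc sb s) (Az z ⟨t.val + 1, hlt'⟩))
                    (Hz z ⟨t.val + 1, hlt'⟩))
                  (Hz z ⟨t.val + 1, hlt'⟩)
              else 0)) = 0 := by
        intro s z
        rw [dif_neg hlt]
        ring
      rw [Finset.sum_congr rfl fun s (_ : s ∈ Finset.univ) =>
        Finset.sum_congr rfl fun z (_ : z ∈ Finset.univ) => hzero s z]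
      simp only [Finset.sum_const_zero, add_zero]
      have hRHS : ∀ z : Zspace 𝓐 𝓛 𝒴,
          (pt z - p z) * Ω (Hz z t) * Tail d p t.val sb z
            = ∑ s : 𝓐 t, (if Az z t = d t (snoc sb s) (Hz z t) then (1:ℝ) else 0)
                * (gP p t s (Hz z t) / gP p t (Az z t) (Hz z t)) * Ω (Hz z t)
                * ((pt z - p z) * Body d p t (snoc sb s) z) := by
        intro z
        rw [Tail_last d p hlt sb z, Finset.mul_sum]
        refine Finset.sum_congr rfl fun s _ => ?_
        ring
      rw [Finset.sum_congr rfl fun z (_ : z ∈ Finset.univ) => hRHS z]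
      rw [Finset.sum_comm]

end Aux11

section Aux12

variable [∀ t, Nonempty (𝓐 t)] [∀ t, Nonempty (𝓛 t)] [Nonempty {y : ℝ // y ∈ 𝒴}]
variable {p : Zspace 𝓐 𝓛 𝒴 → ℝ}

lemma phi_decomp (hτ : 0 < τ) (d : Policy 𝓐 𝓛) (z : Zspace 𝓐 𝓛 𝒴) :
    phiP hτ d p z = Tail d p 0 (emptySbar 𝓐) z
      + qP d p ⟨0, hτ⟩ (emptySbar 𝓐) (Az z ⟨0, hτ⟩) (Hz z ⟨0, hτ⟩) := by
  rw [phiP, Tail]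
  congr 1
  refine Finset.sum_congr rfl fun k _ => ?_
  rw [if_pos (Nat.zero_le _)]
  refine Finset.sum_congr rfl fun e _ => ?_
  rw [DindT_zero, WT_zero, Body]

lemma DW_meas (d : Policy 𝓐 𝓛) (k : Fin τ) (sbk : SbarN 𝓐 (k.val + 1)) :
    ∀ z z' : Zspace 𝓐 𝓛 𝒴, Az z k = Az z' k → Hz z k = Hz z' k →
      DindP d k sbk z * weightP p k sbk z = DindP d k sbk z' * weightP p k sbk z' := by
  intro z z' hA hH
  have hAz : ∀ u : Fin τ, u.val ≤ k.val → Az z u = Az z' u := fun u hu =>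
    az_of_le hu hH hA
  have hHz : ∀ u : Fin τ, u.val ≤ k.val → Hz z u = Hz z' u := fun u hu =>
    hz_of_le hu hH
  rw [DindP, DindP, weightP, weightP]
  congr 1
  · refine Finset.prod_congr rfl fun u _ => ?_
    by_cases hu : u.val ≤ k.val
    · rw [dif_pos hu, dif_pos hu, hAz u hu, hHz u hu]
    · rw [dif_neg hu, dif_neg hu]
  · refine Finset.prod_congr rfl fun u _ => ?_
    by_cases hu : u.val ≤ k.val
    · rw [dif_pos hu, dif_pos hu, hHz u hu, hAz u hu]
    · rw [dif_neg hu, dif_neg hu]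

lemma sum_p_phi (hτ : 0 < τ) (d : Policy 𝓐 𝓛) (hp : ∀ z, 0 < p z) :
    ∑ z : Zspace 𝓐 𝓛 𝒴, p z * phiP hτ d p z = ThetaP hτ d p := by
  have hsummand : ∀ z : Zspace 𝓐 𝓛 𝒴, p z * phiP hτ d p z
      = (∑ k : Fin τ, ∑ e : Ext 𝓐 0 k,
          p z * (DindP d k (mergeExt (emptySbar 𝓐) e) z
            * weightP p k (mergeExt (emptySbar 𝓐) e) z
            * (qNextP d p k (mergeExt (emptySbar 𝓐) e) z
              - mP d p k (mergeExt (emptySbar 𝓐) e) (Az z k) (Hz z k))))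
        + p z * qP d p ⟨0, hτ⟩ (emptySbar 𝓐) (Az z ⟨0, hτ⟩) (Hz z ⟨0, hτ⟩) := by
    intro z
    rw [phiP, mul_add, Finset.mul_sum]
    congr 1
    refine Finset.sum_congr rfl fun k _ => ?_
    rw [Finset.mul_sum]
  rw [Finset.sum_congr rfl fun z (_ : z ∈ Finset.univ) => hsummand z,
    Finset.sum_add_distrib]
  have hzero : (∑ z : Zspace 𝓐 𝓛 𝒴, ∑ k : Fin τ, ∑ e : Ext 𝓐 0 k,
      p z * (DindP d k (mergeExt (emptySbar 𝓐) e) z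
        * weightP p k (mergeExt (emptySbar 𝓐) e) z
        * (qNextP d p k (mergeExt (emptySbar 𝓐) e) z
          - mP d p k (mergeExt (emptySbar 𝓐) e) (Az z k) (Hz z k)))) = 0 := by
    rw [Finset.sum_comm]
    refine Finset.sum_eq_zero fun k _ => ?_
    rw [Finset.sum_comm]
    refine Finset.sum_eq_zero fun e _ => ?_
    set sbk := mergeExt (emptySbar 𝓐) e with hsbk
    have hqm : integrand d p k sbk = qNextP d p k sbk := funext fun z => rfl
    have hm : ∀ z : Zspace 𝓐 𝓛 𝒴, mP d p k sbk (Az z k) (Hz z k)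
        = condExpP p k (Az z k) (Hz z k) (qNextP d p k sbk) := by
      intro z
      rw [mP_eq, hqm]
    have hrw : ∀ z : Zspace 𝓐 𝓛 𝒴,
        p z * (DindP d k sbk z * weightP p k sbk z
          * (qNextP d p k sbk z - mP d p k sbk (Az z k) (Hz z k)))
        = p z * (DindP d k sbk z * weightP p k sbk z)
            * (qNextP d p k sbk z - condExpP p k (Az z k) (Hz z k) (qNextP d p k sbk)) := by
      intro z
      rw [← hm z]
      ring
    rw [Finset.sum_congr rfl fun z _ => hrw z]
    exact sum_weight_sub_condExp hp k _ _ (DW_meas d k sbk)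
  rw [hzero, zero_add]
  rfl

end Aux12
/-- **Gateaux derivative / efficient influence function in the discrete model**
(Corollary 1 of the paper): for a strictly positive pmf `p` and any pmf `p̃` on `𝒵`, the map
`ε ↦ Θ((1-ε) p + ε p̃)` is differentiable at `ε = 0` with derivative
`Σ_z p̃(z) ⬝ (φ_1(z; η(p)) − Θ(p))`. -/
theorem gateaux_derivative_is_canonical_gradient
    [∀ t, Nonempty (𝓐 t)] [∀ t, Nonempty (𝓛 t)]
    (hτ : 0 < τ) (h𝒴 : 𝒴.Nonempty)
    (d : Policy 𝓐 𝓛)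
    (p : Zspace 𝓐 𝓛 𝒴 → ℝ) (hp_pos : ∀ z, 0 < p z)
    (hp_sum : ∑ z : Zspace 𝓐 𝓛 𝒴, p z = 1)
    (pt : Zspace 𝓐 𝓛 𝒴 → ℝ) (hpt_nonneg : ∀ z, 0 ≤ pt z)
    (hpt_sum : ∑ z : Zspace 𝓐 𝓛 𝒴, pt z = 1) :
    HasDerivAt (fun ε : ℝ => ThetaP hτ d (fun z => (1 - ε) * p z + ε * pt z))
      (∑ z : Zspace 𝓐 𝓛 𝒴, pt z * (phiP hτ d p z - ThetaP hτ d p)) 0 := by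
  haveI : Nonempty {y : ℝ // y ∈ 𝒴} := ⟨⟨h𝒴.choose, h𝒴.choose_spec⟩⟩
  have hD := hasDerivAt_ThetaP (p := p) (pt := pt) hτ d hp_pos
  convert hD using 1
  have hclaim : ∑ z : Zspace 𝓐 𝓛 𝒴,
      p z * DM d p pt ⟨0, hτ⟩ (snoc (t := ⟨0, hτ⟩) (emptySbar 𝓐) (Az z ⟨0, hτ⟩))
        (d ⟨0, hτ⟩ (snoc (t := ⟨0, hτ⟩) (emptySbar 𝓐) (Az z ⟨0, hτ⟩)) (Hz z ⟨0, hτ⟩))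
        (Hz z ⟨0, hτ⟩)
      = ∑ z : Zspace 𝓐 𝓛 𝒴, (pt z - p z) * Tail d p 0 (emptySbar 𝓐) z := by
    have h := main_claim (p := p) (pt := pt) d hp_pos τ ⟨0, hτ⟩
      (Nat.sub_le τ 0) (emptySbar 𝓐) (fun _ => 1)
    simp only [mul_one] at h
    exact h
  have h1 : ∑ z : Zspace 𝓐 𝓛 𝒴, pt z * (phiP hτ d p z - ThetaP hτ d p)
      = ∑ z : Zspace 𝓐 𝓛 𝒴, (pt z - p z) * phiP hτ d p z := by
    rw [← sub_eq_zero, ← Finset.sum_sub_distrib]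
    have hz : ∀ z : Zspace 𝓐 𝓛 𝒴, pt z * (phiP hτ d p z - ThetaP hτ d p)
        - (pt z - p z) * phiP hτ d p z
        = p z * phiP hτ d p z - ThetaP hτ d p * pt z := fun z => by ring
    rw [Finset.sum_congr rfl fun z _ => hz z, Finset.sum_sub_distrib,
      sum_p_phi hτ d hp_pos, ← Finset.mul_sum, hpt_sum, mul_one, sub_self]
  rw [h1]
  have h2 : ∀ z : Zspace 𝓐 𝓛 𝒴, (pt z - p z) * phiP hτ d p z
      = (pt z - p z) * Tail d p 0 (emptySbar 𝓐) z
        + (pt z - p z) * qP d p ⟨0, hτ⟩ (emptySbar 𝓐) (Az z ⟨0, hτ⟩) (Hz z ⟨0, hτ⟩) := by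
    intro z
    rw [phi_decomp hτ d z]
    ring
  rw [Finset.sum_congr rfl fun z _ => h2 z, Finset.sum_add_distrib, ← hclaim,
    ← Finset.sum_add_distrib]
  refine Finset.sum_congr rfl fun z _ => ?_
  ring

end GLMTP
end

section
/- (Reduction to contemporaneous LMTPs.) Suppose that each policy function depends only on the contemporaneous natural value of treatment: for every t, d_t((s̄_{t−1}, a_t), h_t) = d̃_t(a_t, h_t) for some function d̃_t : 𝒜_t × ℋ_t → 𝒜_t (i.e., it does not depend on s̄_{t−1}). Then the augmented sequential regression functions collapse: for every t, m_t(s̄_t, a_t, h_t) does not depend on s̄_t and q_t(s̄_{t−1}, a_t, h_t) does not depend on s̄_{t−1}; moreover they coincide with the standard (unaugmented) sequential regression recursion m̃_τ(a_τ, h_τ) = E[Y ∣ A_τ = a_τ, H_τ = h_τ], q̃_t(a_t, h_t) = m̃_t(d̃_t(a_t, h_t), h_t), m̃_t(a_t, h_t) = E[q̃_{t+1}(A_{t+1}, H_{t+1}) ∣ A_t = a_t, H_t = h_t], so that θ = E[q_1(A_1, H_1)] = E[q̃_1(A_1, H_1)]. -/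
open MeasureTheory Finset

namespace GLMTP

variable {τ : ℕ}

variable {𝓐 𝓛 : Fin τ → Type}

variable {Ω : Type} [MeasurableSpace Ω]

variable [∀ t, DecidableEq (𝓐 t)] [∀ t, Fintype (𝓐 t)]

/-- **Reduction to contemporaneous LMTPs.**  If each policy function depends only on the
contemporaneous natural value of treatment, `d_t((s̄_{t-1}, a_t), h_t) = d̃_t(a_t, h_t)`,
then the augmented sequential regression functions collapse: `m_t(s̄_t, a_t, h_t)` does not
depend on `s̄_t` and `q_t(s̄_{t-1}, a_t, h_t)` does not depend on `s̄_{t-1}`; moreover they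
coincide with the standard (unaugmented) recursion
`m̃_τ(a_τ,h_τ) = E[Y ∣ A_τ = a_τ, H_τ = h_τ]`, `q̃_t(a_t,h_t) = m̃_t(d̃_t(a_t,h_t), h_t)`,
`m̃_t(a_t,h_t) = E[q̃_{t+1}(A_{t+1}, H_{t+1}) ∣ A_t = a_t, H_t = h_t]`, so that
`θ = E[q_1(A_1,H_1)] = E[q̃_1(A_1,H_1)]`. -/
theorem reduction_to_contemporaneous_LMTP
    [∀ t, Nonempty (𝓐 t)] [∀ t, Fintype (𝓛 t)] [∀ t, Nonempty (𝓛 t)]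
    (hτ : 0 < τ)
    (M : Model 𝓐 𝓛 Ω) [IsProbabilityMeasure M.μ]
    (hmeas : M.Meas) (hbdd : ∃ C, ∀ ω, |M.Y ω| ≤ C)
    (hpos : M.Positivity)
    (d : Policy 𝓐 𝓛)
    -- the policy depends only on the contemporaneous natural value of treatment
    (dtilde : ∀ t : Fin τ, 𝓐 t → Hist 𝓐 𝓛 t → 𝓐 t)
    (hd : ∀ (t : Fin τ) (sb : SbarN 𝓐 (t.val + 1)) (h : Hist 𝓐 𝓛 t),
      d t sb h = dtilde t (sb ⟨t, Nat.lt_succ_self _⟩) h)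
    -- the augmented sequential regression functions
    (m : ∀ t : Fin τ, SbarN 𝓐 (t.val + 1) → 𝓐 t → Hist 𝓐 𝓛 t → ℝ)
    (hm : IsSeqReg M d m)
    -- the standard (unaugmented) sequential regression recursion
    (mtilde : ∀ t : Fin τ, 𝓐 t → Hist 𝓐 𝓛 t → ℝ)
    (qtilde : ∀ t : Fin τ, 𝓐 t → Hist 𝓐 𝓛 t → ℝ)
    (hqtilde : ∀ (t : Fin τ) (a : 𝓐 t) (h : Hist 𝓐 𝓛 t),
      qtilde t a h = mtilde t (dtilde t a h) h)
    (hmtilde : ∀ (t : Fin τ) (a : 𝓐 t) (h : Hist 𝓐 𝓛 t),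
      mtilde t a h = condExpOn M.μ (M.condEvent t a h) (fun ω =>
        if hlt : t.val + 1 < τ then
          qtilde ⟨t.val + 1, hlt⟩ (M.A ⟨t.val + 1, hlt⟩ ω) (M.Hproc ⟨t.val + 1, hlt⟩ ω)
        else M.Y ω)) :
    -- the augmented regressions do not depend on the augmentation and collapse
    (∀ (t : Fin τ) (sb : SbarN 𝓐 (t.val + 1)) (a : 𝓐 t) (h : Hist 𝓐 𝓛 t),
      m t sb a h = mtilde t a h) ∧
    (∀ (t : Fin τ) (sb : SbarN 𝓐 t.val) (a : 𝓐 t) (h : Hist 𝓐 𝓛 t),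
      qOf d m t sb a h = qtilde t a h) ∧
    theta hτ M d m =
      ∫ ω, qtilde ⟨0, hτ⟩ (M.A ⟨0, hτ⟩ ω) (M.Hproc ⟨0, hτ⟩ ω) ∂M.μ := by
  have hsnoc : ∀ (t : Fin τ) (sb : SbarN 𝓐 t.val) (a : 𝓐 t),
      snoc sb a ⟨t, Nat.lt_succ_self _⟩ = a := by
    intro t sb a
    simp [snoc]
  have key : ∀ n : ℕ, ∀ t : Fin τ, τ - t.val ≤ n →
      ∀ (sb : SbarN 𝓐 (t.val + 1)) (a : 𝓐 t) (h : Hist 𝓐 𝓛 t),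
        m t sb a h = mtilde t a h := by
    intro n
    induction n with
    | zero => intro t ht; exact absurd ht (by have := t.isLt; omega)
    | succ n ih =>
      intro t ht sb a h
      rw [hm t sb a h, hmtilde t a h]
      unfold condExpOn
      congr 2
      funext ω
      unfold Model.qNext
      by_cases hlt : t.val + 1 < τ
      · simp only [dif_pos hlt]
        unfold qOf
        rw [hd, hsnoc, ih ⟨t.val + 1, hlt⟩ (by simp; omega),
          ← hqtilde]
      · simp only [dif_neg hlt]
  have hmm : ∀ (t : Fin τ) (sb : SbarN 𝓐 (t.val + 1)) (a : 𝓐 t) (h : Hist 𝓐 𝓛 t),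
      m t sb a h = mtilde t a h := fun t => key (τ - t.val) t le_rfl
  have hq : ∀ (t : Fin τ) (sb : SbarN 𝓐 t.val) (a : 𝓐 t) (h : Hist 𝓐 𝓛 t),
      qOf d m t sb a h = qtilde t a h := by
    intro t sb a h
    unfold qOf
    rw [hd, hsnoc, hmm, ← hqtilde]
  refine ⟨hmm, hq, ?_⟩
  unfold theta
  exact integral_congr_ae (Filter.Eventually.of_forall fun ω => hq _ _ _ _)

end GLMTP
end
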